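/- arXiv:2408.11786 — 5 statements merged into one kernel-verified Lean document; each statement's English description precedes it below -/
import Mathlib

section
/- For every x ∈ ℝⁿ, the sum over all sets T of (k+1)-element subsets of [n] with |T| = m3 of det(∂̂_{•,T})² · ∏_{i∈[n]} (x_i²)^{d_i(T)} equals (Σ_{i∈[n]} x_i²)^{m2} · ∏_{i∈[n]} (x_i²)^{m1}. (This is Kalai's generating-function theorem: the terms with det ∂̂_{•,T} ≠ 0 are exactly the ℚ-acyclic complexes T, weighted by the square of the order of their torsion groups.) -/
open Matrix

/-- The `j`-element subsets of the vertex set `[n]` (modelled as `Fin n`). -/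
abbrev Face (n j : ℕ) := {s : Finset (Fin n) // s.card = j}

/-- The `j`-element subsets of `[n]` not containing the last vertex `n`
(the vertex of `Fin n` with value `n - 1`). -/
abbrev HFace (n j : ℕ) :=
  {s : Finset (Fin n) // s.card = j ∧ ∀ a ∈ s, (a : ℕ) < n - 1}

/-- The `k`-dimensional boundary matrix `∂`: rows indexed by `k`-subsets `σ`,
columns by `(k+1)`-subsets `τ`; the entry is `(-1)^m` if `σ = τ \ {τ_m}`
(where `τ = {τ_0 < ⋯ < τ_k}`), and `0` otherwise. -/
noncomputable def bdry (n k : ℕ) : Matrix (Face n k) (Face n (k+1)) ℝ :=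
  fun σ τ => ∑ a ∈ τ.1,
    if σ.1 = τ.1.erase a then (-1 : ℝ) ^ ((τ.1.filter (fun b => b < a)).card) else 0

/-- The submatrix `∂̂` of `∂` consisting of the rows indexed by `k`-subsets
not containing the vertex `n`. -/
noncomputable def bdryHat (n k : ℕ) : Matrix (HFace n k) (Face n (k+1)) ℝ :=
  fun σ τ => bdry n k ⟨σ.1, σ.2.1⟩ τ

/-- The submatrix `M_{•,T}` of `M` with columns restricted to `T`. -/
def colSub {ι κ : Type*} (M : Matrix ι κ ℝ) (T : Finset κ) :
    Matrix ι {τ // τ ∈ T} ℝ :=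
  fun i t => M i t.1

/- The squared determinant of a matrix whose row and column index types are in
bijection (`0` if there is no bijection); independent of the chosen bijection. -/
open scoped Classical in
noncomputable def detSq {ι κ : Type*} [Fintype ι] [DecidableEq ι] [Fintype κ]
    (M : Matrix ι κ ℝ) : ℝ :=
  if h : Nonempty (ι ≃ κ) then ((M.submatrix id h.some).det) ^ 2 else 0

/-- The degree `d_i(T)`: the number of members of `T` containing the vertex `i`. -/
def deg (n k : ℕ) (T : Finset (Face n (k+1))) (i : Fin n) : ℕ :=
  (T.filter (fun τ => i ∈ τ.1)).card

/-- The diagonal matrix `X_j` indexed by `j`-subsets, with entries `∏_{i∈σ} x_i`. -/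
noncomputable def Xdiag (n j : ℕ) (x : Fin n → ℝ) :
    Matrix (Face n j) (Face n j) ℝ :=
  Matrix.diagonal (fun σ => ∏ i ∈ σ.1, x i)

/-!
By Cauchy–Binet the left-hand side is `det (∂̂ X² ∂̂ᵀ)`, where `X²` is diagonal with entries
`∏_{i ∈ τ} x_i²`. Conjugating by the diagonal matrix of the monomials `∏_{i ∈ σ} x_i` turns
`∂̂ X² ∂̂ᵀ` into `U Uᵀ + x_n² I`, where `U` is the boundary matrix of the full simplex on the
vertices `1, …, n-1` with each entry weighted by `x_a` for the vertex `a` it adds. These weighted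
boundary matrices still satisfy `∂ ∂ = 0`, and moreover `U Uᵀ + Dᵀ D = c I` with
`c = ∑_{i < n} x_i²` (`D` the weighted boundary one dimension down). Hence `(U Uᵀ)² = c U Uᵀ`:
the eigenvalues of `U Uᵀ` are `0` and `c`, and the trace shows that `c` occurs `C(n-2, k)` times.
So the determinant is `(c + x_n²)^{m₂} (x_n²)^{m₁} ∏_σ ∏_{i ∈ σ} x_i²`, the right-hand side.
-/

open Finset

namespace Finset

variable {α β M R : Type*}

@[to_additive]
theorem prod_prod_eq_prod_pow_card_filter [CommMonoid M] [DecidableEq α] {S : Finset β}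
    {t : β → Finset α} {A : Finset α} (ht : ∀ b ∈ S, t b ⊆ A) (f : α → M) :
    ∏ b ∈ S, ∏ i ∈ t b, f i = ∏ i ∈ A, f i ^ #{b ∈ S | i ∈ t b} := by
  rw [prod_comm' (t' := A) (s' := fun i => {b ∈ S | i ∈ t b})]
  · exact prod_congr rfl fun i _ => prod_const _
  · intro b i
    simp only [mem_filter]
    exact ⟨fun h => ⟨h, ht b h.1 h.2⟩, fun h => h.1⟩

theorem card_filter_mem_powersetCard [DecidableEq α] {A : Finset α} {a : α} (ha : a ∈ A)
    (j : ℕ) : #{s ∈ A.powersetCard (j + 1) | a ∈ s} = (#A - 1).choose j := by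
  rw [← card_erase_of_mem ha, ← card_powersetCard]
  refine card_bij' (fun s _ => s.erase a) (fun s _ => insert a s) ?_ ?_
    (fun s hs => insert_erase (mem_filter.1 hs).2)
    (fun s hs => erase_insert fun h => notMem_erase a A ((mem_powersetCard.1 hs).1 h))
  · simp only [mem_filter, mem_powersetCard, and_imp]
    intro s hsA hs has
    exact ⟨erase_subset_erase a hsA, by rw [card_erase_of_mem has, hs, Nat.add_sub_cancel]⟩
  · simp only [mem_filter, mem_powersetCard, and_imp]
    intro s hsA hs
    have has : a ∉ s := fun h => notMem_erase a A (hsA h)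
    exact ⟨⟨insert_subset ha (hsA.trans (erase_subset a A)), by rw [card_insert_of_notMem has, hs]⟩,
      mem_insert_self a s⟩

theorem card_lt_card_union_of_card_eq_of_ne [DecidableEq α] {s t : Finset α} (hst : #s = #t)
    (hne : s ≠ t) : #s < #(s ∪ t) :=
  card_lt_card <| ssubset_iff_subset_ne.2 ⟨subset_union_left, fun h =>
    hne (eq_of_subset_of_card_le (union_eq_left.1 h.symm) hst.le).symm⟩

variable [AddCommMonoid R]

theorem sum_powersetCard_eq_sum_erase [DecidableEq α] {τ : Finset α} {j : ℕ} (hτ : #τ = j + 1)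
    (f : Finset α → R) : ∑ σ ∈ τ.powersetCard j, f σ = ∑ a ∈ τ, f (τ.erase a) := by
  have himage : τ.powersetCard j = τ.image τ.erase := by
    ext σ
    simp only [mem_powersetCard, mem_image]
    constructor
    · rintro ⟨hστ, hσ⟩
      obtain ⟨a, ha, rfl⟩ := exists_eq_insert_iff.2 ⟨hστ, by omega⟩
      exact ⟨a, mem_insert_self a σ, erase_insert ha⟩
    · rintro ⟨a, ha, rfl⟩
      exact ⟨erase_subset a τ, by rw [card_erase_of_mem ha, hτ, Nat.add_sub_cancel]⟩
  rw [himage, sum_image fun a ha b _ h => (erase_inj τ ha).1 h]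

theorem sum_powersetCard_eq_sum_insert [DecidableEq α] {A σ : Finset α} (hσ : σ ⊆ A) {m : ℕ}
    (hm : #σ + 1 = m) {f : Finset α → R} (hf : ∀ τ, ¬σ ⊆ τ → f τ = 0) :
    ∑ τ ∈ A.powersetCard m, f τ = ∑ a ∈ A \ σ, f (insert a σ) := by
  subst hm
  have himage : {τ ∈ A.powersetCard (#σ + 1) | σ ⊆ τ} = (A \ σ).image (insert · σ) := by
    ext τ
    simp only [mem_filter, mem_powersetCard, mem_image, mem_sdiff]
    constructor
    · rintro ⟨⟨hτA, hτ⟩, hστ⟩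
      obtain ⟨a, ha, rfl⟩ := exists_eq_insert_iff.2 ⟨hστ, hτ.symm⟩
      exact ⟨a, ⟨hτA (mem_insert_self a σ), ha⟩, rfl⟩
    · rintro ⟨a, ⟨haA, ha⟩, rfl⟩
      exact ⟨⟨insert_subset haA hσ, card_insert_of_notMem ha⟩, subset_insert a σ⟩
  rw [← sum_filter_of_ne fun τ _ h => by_contra fun hστ => h (hf τ hστ), himage,
    sum_image fun a ha b _ h => (insert_inj (mem_sdiff.1 ha).2).1 h]

theorem sum_powersetCard_eq_ite_of_superset {A s : Finset α} {m : ℕ} (hsA : s ⊆ A)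
    (hm : m ≤ #s) {f : Finset α → R} (hf : ∀ t, ¬s ⊆ t → f t = 0) :
    ∑ t ∈ A.powersetCard m, f t = if #s = m then f s else 0 := by
  split_ifs with hs
  · refine sum_eq_single_of_mem s (mem_powersetCard.2 ⟨hsA, hs⟩) fun t ht hts =>
      hf t fun hst => hts (eq_of_subset_of_card_le hst ?_).symm
    rw [(mem_powersetCard.1 ht).2, hs]
  · refine sum_eq_zero fun t ht => hf t fun hst => hs ?_
    have := card_le_card hst
    rw [(mem_powersetCard.1 ht).2] at this
    omega

theorem sum_powersetCard_eq_ite_of_subset {A s : Finset α} {m : ℕ} (hsA : s ⊆ A)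
    (hm : #s ≤ m) {f : Finset α → R} (hf : ∀ t, ¬t ⊆ s → f t = 0) :
    ∑ t ∈ A.powersetCard m, f t = if #s = m then f s else 0 := by
  split_ifs with hs
  · refine sum_eq_single_of_mem s (mem_powersetCard.2 ⟨hsA, hs⟩) fun t ht hts =>
      hf t fun hts' => hts (eq_of_subset_of_card_le hts' ?_)
    rw [(mem_powersetCard.1 ht).2, hs]
  · refine sum_eq_zero fun t ht => hf t fun hts => hs ?_
    have := card_le_card hts
    rw [(mem_powersetCard.1 ht).2] at this
    omega

end Finset

section Boundary

variable {V : Type*} [LinearOrder V]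

noncomputable def boundaryCoeff (σ τ : Finset V) : ℝ :=
  ∑ a ∈ τ, if σ = τ.erase a then (-1 : ℝ) ^ #{b ∈ τ | b < a} else 0

theorem boundaryCoeff_of_not_subset {σ τ : Finset V} (h : ¬σ ⊆ τ) : boundaryCoeff σ τ = 0 :=
  sum_eq_zero fun a _ => if_neg fun he : σ = τ.erase a => h (he ▸ erase_subset a τ)

theorem boundaryCoeff_erase {τ : Finset V} {a : V} (ha : a ∈ τ) :
    boundaryCoeff (τ.erase a) τ = (-1) ^ #{b ∈ τ | b < a} := by
  rw [boundaryCoeff, sum_eq_single_of_mem a ha fun b _ hba =>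
    if_neg fun h => hba ((erase_inj τ ha).1 h).symm, if_pos rfl]

theorem boundaryCoeff_insert {σ : Finset V} {a : V} (ha : a ∉ σ) :
    boundaryCoeff σ (insert a σ) = (-1) ^ #{b ∈ σ | b < a} := by
  have h := boundaryCoeff_erase (mem_insert_self a σ)
  rwa [erase_insert ha, filter_insert, if_neg (lt_irrefl a)] at h

theorem neg_one_pow_card_filter_lt_insert {s : Finset V} {a : V} (ha : a ∉ s) (b : V) :
    (-1 : ℝ) ^ #{c ∈ insert a s | c < b}
      = (if a < b then -1 else 1) * (-1) ^ #{c ∈ s | c < b} := by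
  rw [filter_insert]
  split_ifs with hab
  · rw [card_insert_of_notMem fun h => ha (mem_filter.1 h).1, pow_succ, mul_comm]
  · rw [one_mul]

theorem ite_lt_neg_one_one_swap {a b : V} (hab : a ≠ b) :
    (if a < b then (-1 : ℝ) else 1) = -(if b < a then -1 else 1) := by
  rcases hab.lt_or_gt with h | h <;> simp [h, h.not_gt]

theorem sum_powersetCard_boundaryCoeff_mul_boundaryCoeff (ρ : Finset V) {τ : Finset V} {j : ℕ}
    (hτ : #τ = j + 2) :
    ∑ σ ∈ τ.powersetCard (j + 1), boundaryCoeff ρ σ * boundaryCoeff σ τ = 0 := by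
  -- The sum runs over ordered pairs `(a, b)` of distinct vertices of `τ` with
  -- `ρ = τ \ {a, b}`, and the terms of `(a, b)` and `(b, a)` cancel.
  let F : V → V → ℝ := fun a b => if ρ = (τ.erase a).erase b then
    (-1) ^ #{c ∈ τ.erase a | c < b} * (-1) ^ #{c ∈ τ.erase b | c < a} else 0
  have hexpand : ∑ σ ∈ τ.powersetCard (j + 1), boundaryCoeff ρ σ * boundaryCoeff σ τ
      = ∑ a ∈ τ, ∑ b ∈ τ.erase a, (if b < a then -1 else 1) * F a b := by
    rw [sum_powersetCard_eq_sum_erase hτ]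
    refine sum_congr rfl fun a ha => ?_
    rw [boundaryCoeff_erase ha, boundaryCoeff, sum_mul]
    refine sum_congr rfl fun b hb => ?_
    have hsign := neg_one_pow_card_filter_lt_insert (notMem_erase b τ) a
    rw [insert_erase (mem_of_mem_erase hb)] at hsign
    rw [hsign]
    simp only [F]
    split_ifs <;> ring
  have hanti : ∀ a ∈ τ, ∀ b ∈ τ.erase a,
      (if a < b then -1 else 1) * F b a = -((if b < a then -1 else 1) * F a b) := by
    intro a _ b hb
    rw [ite_lt_neg_one_one_swap (ne_of_mem_erase hb).symm]
    simp only [F, erase_right_comm (a := a), mul_comm ((-1 : ℝ) ^ #{c ∈ τ.erase b | c < a})]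
    ring
  have hswap : ∑ a ∈ τ, ∑ b ∈ τ.erase a, (if b < a then -1 else 1) * F a b
      = ∑ a ∈ τ, ∑ b ∈ τ.erase a, (if a < b then -1 else 1) * F b a :=
    sum_comm' fun a b => by simp only [mem_erase]; tauto
  rw [sum_congr rfl fun a ha => sum_congr rfl (hanti a ha)] at hswap
  simp only [sum_neg_distrib] at hswap
  rw [hexpand]
  linarith

noncomputable def weightedBoundaryCoeff (x : V → ℝ) (σ τ : Finset V) : ℝ :=
  boundaryCoeff σ τ * ∏ i ∈ τ \ σ, x i

variable {x : V → ℝ}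

theorem prod_mul_weightedBoundaryCoeff (σ τ : Finset V) :
    (∏ i ∈ σ, x i) * weightedBoundaryCoeff x σ τ = boundaryCoeff σ τ * ∏ i ∈ τ, x i := by
  by_cases h : σ ⊆ τ
  · rw [weightedBoundaryCoeff, mul_left_comm, mul_comm (∏ i ∈ σ, x i), prod_sdiff h]
  · simp [weightedBoundaryCoeff, boundaryCoeff_of_not_subset h]

theorem weightedBoundaryCoeff_of_not_subset {σ τ : Finset V} (h : ¬σ ⊆ τ) :
    weightedBoundaryCoeff x σ τ = 0 := by
  rw [weightedBoundaryCoeff, boundaryCoeff_of_not_subset h, zero_mul]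

theorem weightedBoundaryCoeff_insert {σ : Finset V} {a : V} (ha : a ∉ σ) :
    weightedBoundaryCoeff x σ (insert a σ) = (-1) ^ #{b ∈ σ | b < a} * x a := by
  rw [weightedBoundaryCoeff, boundaryCoeff_insert ha, insert_sdiff_cancel ha, prod_singleton]

theorem weightedBoundaryCoeff_insert_sq {σ : Finset V} {a : V} (ha : a ∉ σ) :
    weightedBoundaryCoeff x σ (insert a σ) ^ 2 = x a ^ 2 := by
  rw [weightedBoundaryCoeff_insert ha, mul_pow, ← pow_mul, pow_mul', neg_one_sq, one_pow, one_mul]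

theorem weightedBoundaryCoeff_mul_weightedBoundaryCoeff {ρ σ τ : Finset V} (hστ : σ ⊆ τ) :
    weightedBoundaryCoeff x ρ σ * weightedBoundaryCoeff x σ τ
      = (∏ i ∈ τ \ ρ, x i) * (boundaryCoeff ρ σ * boundaryCoeff σ τ) := by
  by_cases hρσ : ρ ⊆ σ
  · rw [weightedBoundaryCoeff, weightedBoundaryCoeff, ← sdiff_union_sdiff_cancel hστ hρσ,
      prod_union (disjoint_of_subset_right sdiff_subset sdiff_disjoint)]
    ring
  · rw [weightedBoundaryCoeff_of_not_subset hρσ, boundaryCoeff_of_not_subset hρσ]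
    ring

theorem sum_powersetCard_weightedBoundaryCoeff_mul_weightedBoundaryCoeff (ρ : Finset V)
    {A τ : Finset V} {j : ℕ} (hτA : τ ⊆ A) (hτ : #τ = j + 2) :
    ∑ σ ∈ A.powersetCard (j + 1), weightedBoundaryCoeff x ρ σ * weightedBoundaryCoeff x σ τ
      = 0 := by
  have hsupport : ∀ σ ∈ A.powersetCard (j + 1), σ ∉ τ.powersetCard (j + 1) →
      weightedBoundaryCoeff x ρ σ * weightedBoundaryCoeff x σ τ = 0 := fun σ hσ hστ => by
    rw [weightedBoundaryCoeff_of_not_subset fun h =>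
      hστ (mem_powersetCard.2 ⟨h, (mem_powersetCard.1 hσ).2⟩), mul_zero]
  rw [← sum_subset (powersetCard_mono hτA) hsupport,
    sum_congr rfl fun σ hσ =>
      weightedBoundaryCoeff_mul_weightedBoundaryCoeff (mem_powersetCard.1 hσ).1,
    ← mul_sum, sum_powersetCard_boundaryCoeff_mul_boundaryCoeff ρ hτ, mul_zero]

theorem sum_powersetCard_weightedBoundaryCoeff_left_sq {A σ : Finset V} {j : ℕ} (hσA : σ ⊆ A)
    (hσ : #σ = j + 1) :
    ∑ τ ∈ A.powersetCard (j + 2), weightedBoundaryCoeff x σ τ ^ 2 = ∑ a ∈ A \ σ, x a ^ 2 := by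
  rw [sum_powersetCard_eq_sum_insert hσA (by omega) fun τ h => by
    rw [weightedBoundaryCoeff_of_not_subset h, zero_pow two_ne_zero]]
  exact sum_congr rfl fun a ha => weightedBoundaryCoeff_insert_sq (mem_sdiff.1 ha).2

theorem sum_powersetCard_weightedBoundaryCoeff_right_sq {A τ : Finset V} {j : ℕ} (hτA : τ ⊆ A)
    (hτ : #τ = j + 1) :
    ∑ σ ∈ A.powersetCard j, weightedBoundaryCoeff x σ τ ^ 2 = ∑ a ∈ τ, x a ^ 2 := by
  have hsupport : ∀ σ ∈ A.powersetCard j, σ ∉ τ.powersetCard j →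
      weightedBoundaryCoeff x σ τ ^ 2 = 0 := fun σ hσ hστ => by
    rw [weightedBoundaryCoeff_of_not_subset fun h =>
      hστ (mem_powersetCard.2 ⟨h, (mem_powersetCard.1 hσ).2⟩), zero_pow two_ne_zero]
  rw [← sum_subset (powersetCard_mono hτA) hsupport, sum_powersetCard_eq_sum_erase hτ]
  refine sum_congr rfl fun a ha => ?_
  have h := weightedBoundaryCoeff_insert_sq (x := x) (notMem_erase a τ)
  rwa [insert_erase ha] at h

theorem weightedBoundaryCoeff_exchange {ρ : Finset V} {a b : V} (hab : a ≠ b) (ha : a ∉ ρ)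
    (hb : b ∉ ρ) :
    weightedBoundaryCoeff x (insert a ρ) (insert a ρ ∪ insert b ρ)
        * weightedBoundaryCoeff x (insert b ρ) (insert a ρ ∪ insert b ρ)
      + weightedBoundaryCoeff x ρ (insert a ρ) * weightedBoundaryCoeff x ρ (insert b ρ) = 0 := by
  have hunion : insert a ρ ∪ insert b ρ = insert b (insert a ρ) := by
    ext
    simp only [mem_union, mem_insert]
    tauto
  rw [hunion, weightedBoundaryCoeff_insert (by simp [hab.symm, hb]), insert_comm,
    weightedBoundaryCoeff_insert (by simp [hab, ha]), weightedBoundaryCoeff_insert ha,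
    weightedBoundaryCoeff_insert hb, neg_one_pow_card_filter_lt_insert ha,
    neg_one_pow_card_filter_lt_insert hb]
  rcases hab.lt_or_gt with h | h <;> simp only [h, h.not_gt, if_true, if_false] <;> ring

theorem laplacian_weightedBoundaryCoeff_of_ne {A σ σ' : Finset V} {j : ℕ}
    (hσ : σ ∈ A.powersetCard (j + 1)) (hσ' : σ' ∈ A.powersetCard (j + 1)) (hne : σ ≠ σ') :
    ∑ τ ∈ A.powersetCard (j + 2), weightedBoundaryCoeff x σ τ * weightedBoundaryCoeff x σ' τ
      + ∑ ρ ∈ A.powersetCard j, weightedBoundaryCoeff x ρ σ * weightedBoundaryCoeff x ρ σ'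
      = 0 := by
  -- Only `τ = σ ∪ σ'` and `ρ = σ ∩ σ'` can contribute, and only when `σ` and `σ'` differ in a
  -- single vertex.
  rw [mem_powersetCard] at hσ hσ'
  have hunion := card_lt_card_union_of_card_eq_of_ne (hσ.2.trans hσ'.2.symm) hne
  have hcard := card_union_add_card_inter σ σ'
  rw [sum_powersetCard_eq_ite_of_superset (union_subset hσ.1 hσ'.1) (by omega) fun τ h => by
      rcases not_and_or.1 (union_subset_iff.not.1 h) with h | h <;>
        simp [weightedBoundaryCoeff_of_not_subset h],
    sum_powersetCard_eq_ite_of_subset (s := σ ∩ σ') (inter_subset_left.trans hσ.1) (by omega)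
      fun ρ h => by
        rcases not_and_or.1 (subset_inter_iff.not.1 h) with h | h <;>
          simp [weightedBoundaryCoeff_of_not_subset h]]
  by_cases h : #(σ ∩ σ') = j
  · rw [if_pos (by omega), if_pos h]
    obtain ⟨a, ha, hσa⟩ :=
      exists_eq_insert_iff (s := σ ∩ σ') (t := σ) |>.2 ⟨inter_subset_left, by omega⟩
    obtain ⟨b, hb, hσb⟩ :=
      exists_eq_insert_iff (s := σ ∩ σ') (t := σ') |>.2 ⟨inter_subset_right, by omega⟩
    generalize σ ∩ σ' = ρ at ha hb hσa hσb ⊢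
    subst hσa hσb
    exact weightedBoundaryCoeff_exchange (by rintro rfl; exact hne rfl) ha hb
  · rw [if_neg (by omega), if_neg h, add_zero]

theorem sum_powersetCard_filter_mem_weightedBoundaryCoeff_mul {A σ σ' : Finset V} {ℓ : V}
    {j : ℕ} (hσ : #σ = j + 1) (hσ' : #σ' = j + 1) (hℓ : ℓ ∉ σ ∪ σ')
    (hA : insert ℓ (σ ∪ σ') ⊆ A) :
    ∑ τ ∈ A.powersetCard (j + 2) with ℓ ∈ τ,
        weightedBoundaryCoeff x σ τ * weightedBoundaryCoeff x σ' τ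
      = if σ = σ' then x ℓ ^ 2 else 0 := by
  have hcard : #(insert ℓ (σ ∪ σ')) = #(σ ∪ σ') + 1 := card_insert_of_notMem hℓ
  have hsupport : ∀ τ, ¬insert ℓ (σ ∪ σ') ⊆ τ →
      (if ℓ ∈ τ then weightedBoundaryCoeff x σ τ * weightedBoundaryCoeff x σ' τ else 0) = 0 := by
    intro τ h
    simp only [insert_subset_iff, union_subset_iff, not_and_or] at h
    rcases h with h | h | h <;> simp [h, weightedBoundaryCoeff_of_not_subset]
  rw [sum_filter, sum_powersetCard_eq_ite_of_superset hA
    (by have := card_le_card (subset_union_left : σ ⊆ σ ∪ σ'); omega) hsupport]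
  by_cases h : σ = σ'
  · subst h
    rw [union_self] at hℓ ⊢
    rw [if_pos (by rw [card_insert_of_notMem hℓ, hσ]), if_pos (mem_insert_self ℓ σ), if_pos rfl,
      ← sq, weightedBoundaryCoeff_insert_sq hℓ]
  · have := card_lt_card_union_of_card_eq_of_ne (hσ.trans hσ'.symm) h
    rw [if_neg (by omega), if_neg h]

end Boundary

namespace Matrix.IsHermitian

variable {I : Type*} [Fintype I] [DecidableEq I] {A : Matrix I I ℝ}

theorem det_add_smul_one (hA : A.IsHermitian) (t : ℝ) :
    (A + t • 1).det = ∏ i, (hA.eigenvalues i + t) := by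
  have h := A.eval_charpoly (-t)
  have hneg : scalar I (-t) - A = -(A + t • 1) := by
    rw [scalar_apply, neg_add, smul_one_eq_diagonal, diagonal_neg, sub_eq_neg_add]
  rw [hA.charpoly_eq, Polynomial.eval_prod, hneg, det_neg] at h
  simp only [Polynomial.eval_sub, Polynomial.eval_X, Polynomial.eval_C, RCLike.ofReal_real_eq_id,
    id] at h
  rw [show ∏ i, (-t - hA.eigenvalues i) = ∏ i, ((-1) * (hA.eigenvalues i + t)) from
    prod_congr rfl fun i _ => by ring, prod_mul_distrib, prod_const, card_univ] at h
  exact mul_right_injective₀ (pow_ne_zero _ (neg_ne_zero.2 one_ne_zero)) h.symm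

theorem eigenvalues_eq_zero_or_eq_of_mul_self_eq_smul (hA : A.IsHermitian) {c : ℝ}
    (hAA : A * A = c • A) (i : I) : hA.eigenvalues i = 0 ∨ hA.eigenvalues i = c := by
  set v := ⇑(hA.eigenvectorBasis i)
  have hv : v ≠ 0 := fun h => hA.eigenvectorBasis.orthonormal.ne_zero i (by
    ext w
    exact congrFun h w)
  have hμ : (hA.eigenvalues i * hA.eigenvalues i) • v = (c * hA.eigenvalues i) • v := by
    rw [← smul_smul, ← hA.mulVec_eigenvectorBasis, ← mulVec_smul, ← hA.mulVec_eigenvectorBasis,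
      mulVec_mulVec, hAA, smul_mulVec, hA.mulVec_eigenvectorBasis, smul_smul]
  rcases eq_or_ne (hA.eigenvalues i) 0 with h | h
  · exact Or.inl h
  · exact Or.inr (mul_right_cancel₀ h (smul_left_injective ℝ hv hμ))

theorem det_add_smul_one_of_mul_self_eq_smul (hA : A.IsHermitian) {c : ℝ} (hAA : A * A = c • A)
    {r : ℕ} (htr : A.trace = r * c) (hr : r ≤ Fintype.card I) (t : ℝ) :
    (A + t • 1).det = (c + t) ^ r * t ^ (Fintype.card I - r) := by
  let P : Finset I := {i | hA.eigenvalues i = c}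
  have hcompl : ∀ i ∈ ({i | ¬hA.eigenvalues i = c} : Finset I), hA.eigenvalues i = 0 :=
    fun i hi => (hA.eigenvalues_eq_zero_or_eq_of_mul_self_eq_smul hAA i).resolve_right
      (mem_filter.1 hi).2
  have hP : #P + #({i | ¬hA.eigenvalues i = c} : Finset I) = Fintype.card I :=
    card_filter_add_card_filter_not _
  have hdet : (A + t • 1).det = (c + t) ^ #P * t ^ (Fintype.card I - #P) := by
    rw [hA.det_add_smul_one, ← prod_filter_mul_prod_filter_not univ (hA.eigenvalues · = c),
      prod_congr rfl (g := fun _ => c + t) fun i hi => by rw [(mem_filter.1 hi).2], prod_const,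
      prod_congr rfl (g := fun _ => t) fun i hi => by rw [hcompl i hi, zero_add], prod_const]
    congr 2
    omega
  have htrace : A.trace = #P * c := by
    rw [hA.trace_eq_sum_eigenvalues]
    simp only [RCLike.ofReal_real_eq_id, id]
    rw [← sum_filter_add_sum_filter_not univ (hA.eigenvalues · = c),
      sum_congr rfl (g := fun _ => c) fun i hi => (mem_filter.1 hi).2, sum_congr rfl hcompl,
      sum_const, sum_const_zero, add_zero, nsmul_eq_mul]
  rw [hdet]
  rcases eq_or_ne c 0 with rfl | hc
  · rw [zero_add, ← pow_add, ← pow_add, Nat.add_sub_cancel' hr, Nat.add_sub_cancel' (by omega)]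
  · rw [htrace] at htr
    rw [show #P = r by exact_mod_cast mul_right_cancel₀ hc htr]

end Matrix.IsHermitian

section CauchyBinet

variable {ι κ R : Type*} [Fintype ι] [DecidableEq ι] [Fintype κ]

theorem Matrix.det_mul_eq_sum_prod_mul_det_submatrix [CommRing R] (A : Matrix ι κ R)
    (B : Matrix κ ι R) :
    (A * B).det = ∑ r : ι → κ, (∏ i, A i (r i)) * (B.submatrix r id).det := by
  have hrows : A * B = of fun i => ∑ j, A i j • B j := by
    ext i k
    simp [mul_apply, Finset.sum_apply]
  calc (A * B).det = detRowAlternating.toMultilinearMap (fun i => ∑ j, A i j • B j) := by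
        rw [hrows]
        rfl
    _ = ∑ r : ι → κ, detRowAlternating.toMultilinearMap (fun i => A i (r i) • B (r i)) :=
        MultilinearMap.map_sum _ _
    _ = _ := sum_congr rfl fun r _ => det_mul_column (fun i => A i (r i)) (B.submatrix r id)

variable [DecidableEq κ]

theorem Finset.sum_eq_sum_card_eq_sum_of_injective [AddCommMonoid R] (c : (ι → κ) → R)
    (hc : ∀ r, ¬Function.Injective r → c r = 0) :
    ∑ r, c r = ∑ T : Finset κ with #T = Fintype.card ι, ∑ f : ι → T, c (Subtype.val ∘ f) := by
  rw [← sum_filter_of_ne fun r _ h => by_contra fun hr => h (hc r hr),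
    ← sum_fiberwise_of_maps_to (g := fun r => univ.image r)
      (t := {T : Finset κ | #T = Fintype.card ι}) fun r hr => by
      simp only [mem_filter, mem_univ, true_and] at hr ⊢
      rw [card_image_of_injective _ hr, card_univ]]
  refine sum_congr rfl fun T hT => ?_
  rw [← sum_filter_of_ne (s := univ) (p := fun f : ι → T => Function.Injective f)
    fun f _ h => by_contra fun hf => h (hc _ fun hinj => hf hinj.of_comp)]
  refine (sum_bij' (fun f _ => Subtype.val ∘ f)
    (fun r hr i => ⟨r i, (mem_filter.1 hr).2 ▸ mem_image_of_mem r (mem_univ i)⟩) ?_ ?_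
    (fun _ _ => rfl) (fun _ _ => rfl) (fun _ _ => rfl)).symm
  · simp only [mem_filter, mem_univ, true_and]
    intro f hf
    have hinj := Subtype.val_injective.comp hf
    refine ⟨hinj, eq_of_subset_of_card_le (fun _ h => ?_) ?_⟩
    · obtain ⟨i, -, rfl⟩ := mem_image.1 h
      exact (f i).2
    · rw [card_image_of_injective _ hinj, card_univ, (mem_filter.1 hT).2]
  · simp only [mem_filter, mem_univ, true_and]
    exact fun r hr i j h => hr.1 (congrArg Subtype.val h)

theorem Matrix.det_mul_eq_sum_det_submatrix_mul [CommRing R] (A : Matrix ι κ R)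
    (B : Matrix κ ι R) :
    (A * B).det = ∑ T : Finset κ with #T = Fintype.card ι,
      (A.submatrix id ((↑) : T → κ) * B.submatrix ((↑) : T → κ) id).det := by
  simp only [det_mul_eq_sum_prod_mul_det_submatrix]
  refine sum_eq_sum_card_eq_sum_of_injective _ fun r hr => ?_
  obtain ⟨i, i', hii', hne⟩ := Function.not_injective_iff.1 hr
  rw [det_zero_of_row_eq hne (funext fun k => by simp [hii']), mul_zero]

theorem det_mul_diagonal_mul_transpose (M : Matrix ι κ ℝ) (D : κ → ℝ) :
    (M * diagonal D * Mᵀ).det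
      = ∑ T : Finset κ with #T = Fintype.card ι, detSq (colSub M T) * ∏ τ ∈ T, D τ := by
  rw [Matrix.mul_assoc, det_mul_eq_sum_det_submatrix_mul]
  refine sum_congr rfl fun T hT => ?_
  have he : Nonempty (ι ≃ T) :=
    ⟨Fintype.equivOfCardEq (by rw [Fintype.card_coe, (mem_filter.1 hT).2])⟩
  rw [detSq, dif_pos he]
  set e := he.some
  have hrows : ((diagonal D * Mᵀ).submatrix ((↑) : T → κ) id).submatrix e id
      = diagonal (fun i => D (e i)) * ((colSub M T).submatrix id e)ᵀ := by
    ext i k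
    simp [diagonal_mul, colSub]
  rw [← submatrix_id_id (_ * _), ← submatrix_mul_equiv _ _ _ e, det_mul, hrows, det_mul,
    det_diagonal, det_transpose, e.prod_comp (fun τ => D τ), prod_coe_sort T D]
  change ((colSub M T).submatrix id e).det * _ = _
  ring

end CauchyBinet

section Faces

def lowVertices (n : ℕ) : Finset (Fin n) := {a | (a : ℕ) < n - 1}

theorem mem_powersetCard_lowVertices {n j : ℕ} {s : Finset (Fin n)} :
    s ∈ (lowVertices n).powersetCard j ↔ #s = j ∧ ∀ a ∈ s, (a : ℕ) < n - 1 := by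
  simp only [mem_powersetCard, lowVertices, subset_iff, mem_filter, mem_univ, true_and, and_comm]

theorem card_lowVertices (n : ℕ) : #(lowVertices n) = n - 1 := by
  rw [lowVertices, Fin.card_filter_val_lt]
  omega

theorem lowVertices_succ (m : ℕ) : lowVertices (m + 1) = univ.erase (Fin.last m) := by
  ext a
  simp [lowVertices, ← Fin.lt_last_iff_ne_last, Fin.lt_def]

theorem filter_last_notMem_powersetCard_univ (m r : ℕ) :
    {s ∈ (univ : Finset (Fin (m + 1))).powersetCard r | Fin.last m ∉ s}
      = (lowVertices (m + 1)).powersetCard r := by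
  ext s
  simp [lowVertices_succ, mem_powersetCard, subset_erase, and_comm]

@[to_additive]
theorem prod_hFace {M : Type*} [CommMonoid M] {n j : ℕ} (f : Finset (Fin n) → M) :
    ∏ σ : HFace n j, f σ.1 = ∏ s ∈ (lowVertices n).powersetCard j, f s :=
  (prod_subtype _ (fun _ => mem_powersetCard_lowVertices) f).symm

theorem sum_face {n j : ℕ} (f : Finset (Fin n) → ℝ) :
    ∑ τ : Face n j, f τ.1 = ∑ s ∈ univ.powersetCard j, f s :=
  (sum_subtype _ (fun _ => mem_powersetCard_univ) f).symm

theorem card_hFace (n j : ℕ) : Fintype.card (HFace n j) = (n - 1).choose j := by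
  rw [Fintype.card_of_subtype _ fun _ => mem_powersetCard_lowVertices, card_powersetCard,
    card_lowVertices]

end Faces

section Laplacian

noncomputable def weightedBoundary (n j : ℕ) (x : Fin n → ℝ) :
    Matrix (HFace n j) (HFace n (j + 1)) ℝ :=
  of fun ρ σ => weightedBoundaryCoeff x ρ.1 σ.1

noncomputable def upLaplacian (n j : ℕ) (x : Fin n → ℝ) :
    Matrix (HFace n (j + 1)) (HFace n (j + 1)) ℝ :=
  weightedBoundary n (j + 1) x * (weightedBoundary n (j + 1) x)ᵀ

variable {n j : ℕ} {x : Fin n → ℝ}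

theorem weightedBoundary_mul_weightedBoundary :
    weightedBoundary n j x * weightedBoundary n (j + 1) x = 0 := by
  ext ρ τ
  simp only [mul_apply, weightedBoundary, of_apply, Matrix.zero_apply]
  rw [sum_hFace (fun σ => weightedBoundaryCoeff x ρ.1 σ * weightedBoundaryCoeff x σ τ.1)]
  have hτ := mem_powersetCard.1 (mem_powersetCard_lowVertices.2 τ.2)
  exact sum_powersetCard_weightedBoundaryCoeff_mul_weightedBoundaryCoeff ρ.1 hτ.1 hτ.2

theorem upLaplacian_add_transpose_mul_weightedBoundary :
    upLaplacian n j x + (weightedBoundary n j x)ᵀ * weightedBoundary n j x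
      = (∑ a ∈ lowVertices n, x a ^ 2) • 1 := by
  ext σ σ'
  simp only [upLaplacian, Matrix.add_apply, mul_apply, transpose_apply, weightedBoundary, of_apply,
    Matrix.smul_apply, one_apply, smul_eq_mul, mul_ite, mul_one, mul_zero]
  rw [sum_hFace (fun τ => weightedBoundaryCoeff x σ.1 τ * weightedBoundaryCoeff x σ'.1 τ),
    sum_hFace (fun ρ => weightedBoundaryCoeff x ρ σ.1 * weightedBoundaryCoeff x ρ σ'.1)]
  have hσ := mem_powersetCard_lowVertices.2 σ.2
  split_ifs with h
  · subst h
    obtain ⟨hσA, hσcard⟩ := mem_powersetCard.1 hσ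
    simp only [← sq]
    rw [sum_powersetCard_weightedBoundaryCoeff_left_sq hσA hσcard,
      sum_powersetCard_weightedBoundaryCoeff_right_sq hσA hσcard, sum_sdiff hσA]
  · exact laplacian_weightedBoundaryCoeff_of_ne hσ (mem_powersetCard_lowVertices.2 σ'.2)
      fun h' => h (Subtype.ext h')

theorem upLaplacian_isHermitian : (upLaplacian n j x).IsHermitian := by
  simpa only [upLaplacian, conjTranspose_eq_transpose_of_trivial] using
    isHermitian_mul_conjTranspose_self (weightedBoundary n (j + 1) x)

theorem upLaplacian_mul_self :
    upLaplacian n j x * upLaplacian n j x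
      = (∑ a ∈ lowVertices n, x a ^ 2) • upLaplacian n j x := by
  have hL : upLaplacian n j x = (∑ a ∈ lowVertices n, x a ^ 2) • (1 : Matrix _ _ ℝ)
      - (weightedBoundary n j x)ᵀ * weightedBoundary n j x :=
    eq_sub_of_add_eq upLaplacian_add_transpose_mul_weightedBoundary
  have hDU : upLaplacian n j x * ((weightedBoundary n j x)ᵀ * weightedBoundary n j x) = 0 := by
    rw [upLaplacian, Matrix.mul_assoc, ← Matrix.mul_assoc _ (weightedBoundary n j x)ᵀ,
      ← transpose_mul, weightedBoundary_mul_weightedBoundary, transpose_zero, Matrix.zero_mul,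
      Matrix.mul_zero]
  nth_rw 2 [hL]
  rw [Matrix.mul_sub, hDU, sub_zero, Matrix.mul_smul, Matrix.mul_one]

theorem trace_upLaplacian :
    (upLaplacian n j x).trace
      = ((n - 2).choose (j + 1) : ℝ) * ∑ a ∈ lowVertices n, x a ^ 2 := by
  rw [upLaplacian, trace_mul_comm, trace]
  simp only [diag_apply, mul_apply, transpose_apply, weightedBoundary, of_apply, ← sq]
  have hcolumn : ∀ τ : HFace n (j + 2),
      ∑ σ : HFace n (j + 1), weightedBoundaryCoeff x σ.1 τ.1 ^ 2 = ∑ a ∈ τ.1, x a ^ 2 := by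
    intro τ
    have hτ := mem_powersetCard.1 (mem_powersetCard_lowVertices.2 τ.2)
    rw [sum_hFace (fun σ => weightedBoundaryCoeff x σ τ.1 ^ 2)]
    exact sum_powersetCard_weightedBoundaryCoeff_right_sq hτ.1 hτ.2
  rw [sum_congr rfl fun τ _ => hcolumn τ, sum_hFace (fun τ => ∑ a ∈ τ, x a ^ 2),
    sum_sum_eq_sum_nsmul_card_filter (fun τ hτ => (mem_powersetCard.1 hτ).1), mul_sum]
  refine sum_congr rfl fun a ha => ?_
  rw [card_filter_mem_powersetCard ha, card_lowVertices, nsmul_eq_mul, Nat.sub_sub]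

end Laplacian

section Determinant

variable {m j : ℕ} {x : Fin (m + 1) → ℝ}

theorem bdryHat_mul_diagonal_mul_transpose :
    bdryHat (m + 1) (j + 1) * diagonal (fun τ : Face (m + 1) (j + 2) => ∏ i ∈ τ.1, x i ^ 2)
        * (bdryHat (m + 1) (j + 1))ᵀ
      = diagonal (fun σ : HFace (m + 1) (j + 1) => ∏ i ∈ σ.1, x i)
        * (upLaplacian (m + 1) j x + x (Fin.last m) ^ 2 • 1)
        * diagonal (fun σ : HFace (m + 1) (j + 1) => ∏ i ∈ σ.1, x i) := by
  ext σ σ'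
  have hσ := mem_powersetCard.1 (mem_powersetCard_lowVertices.2 σ.2)
  have hσ' := mem_powersetCard.1 (mem_powersetCard_lowVertices.2 σ'.2)
  have hℓ : Fin.last m ∉ σ.1 ∪ σ'.1 := fun h => notMem_erase (Fin.last m) univ <| by
    rw [← lowVertices_succ]
    exact union_subset hσ.1 hσ'.1 h
  have hterm : ∀ τ : Face (m + 1) (j + 2),
      bdryHat (m + 1) (j + 1) σ τ * (∏ i ∈ τ.1, x i ^ 2) * bdryHat (m + 1) (j + 1) σ' τ
        = (∏ i ∈ σ.1, x i) * (∏ i ∈ σ'.1, x i)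
          * (weightedBoundaryCoeff x σ.1 τ.1 * weightedBoundaryCoeff x σ'.1 τ.1) := by
    intro τ
    have h := prod_mul_weightedBoundaryCoeff (x := x) σ.1 τ.1
    have h' := prod_mul_weightedBoundaryCoeff (x := x) σ'.1 τ.1
    change boundaryCoeff σ.1 τ.1 * _ * boundaryCoeff σ'.1 τ.1 = _
    rw [prod_pow]
    linear_combination (-(boundaryCoeff σ'.1 τ.1 * ∏ i ∈ τ.1, x i)) * h
      - ((∏ i ∈ σ.1, x i) * weightedBoundaryCoeff x σ.1 τ.1) * h'
  -- Faces avoiding the last vertex give the up-Laplacian; among the others only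
  -- `insert (Fin.last m) σ` meets both rows, and only when `σ = σ'`.
  rw [mul_apply]
  simp only [mul_diagonal, diagonal_mul, transpose_apply]
  rw [sum_congr rfl fun τ _ => hterm τ, ← mul_sum,
    sum_face (fun τ => weightedBoundaryCoeff x σ.1 τ * weightedBoundaryCoeff x σ'.1 τ),
    ← sum_filter_not_add_sum_filter _ (Fin.last m ∈ ·), filter_last_notMem_powersetCard_univ,
    sum_powersetCard_filter_mem_weightedBoundaryCoeff_mul hσ.2 hσ'.2 hℓ (subset_univ _)]
  simp only [upLaplacian, Matrix.add_apply, mul_apply, transpose_apply, weightedBoundary, of_apply,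
    Matrix.smul_apply, one_apply, Subtype.ext_iff, smul_eq_mul, mul_ite, mul_one, mul_zero]
  rw [sum_hFace (fun τ => weightedBoundaryCoeff x σ.1 τ * weightedBoundaryCoeff x σ'.1 τ)]
  ring

theorem det_bdryHat_mul_diagonal_mul_transpose (hm : 1 ≤ m) :
    (bdryHat (m + 1) (j + 1) * diagonal (fun τ : Face (m + 1) (j + 2) => ∏ i ∈ τ.1, x i ^ 2)
        * (bdryHat (m + 1) (j + 1))ᵀ).det
      = (∑ i, x i ^ 2) ^ ((m - 1).choose (j + 1)) * ∏ i, (x i ^ 2) ^ ((m - 1).choose j) := by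
  have hpascal : m.choose (j + 1) = (m - 1).choose (j + 1) + (m - 1).choose j := by
    obtain ⟨m', rfl⟩ : ∃ m', m = m' + 1 := ⟨m - 1, by omega⟩
    rw [Nat.choose_succ_succ', Nat.add_sub_cancel, add_comm]
  have hsum : ∑ i, x i ^ 2 = ∑ a ∈ lowVertices (m + 1), x a ^ 2 + x (Fin.last m) ^ 2 := by
    rw [lowVertices_succ, sum_erase_add _ _ (mem_univ _)]
  have hweights : ∏ a ∈ lowVertices (m + 1), (x a ^ 2) ^ ((m - 1).choose j)
      = (∏ σ : HFace (m + 1) (j + 1), ∏ i ∈ σ.1, x i) ^ 2 := by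
    rw [← prod_pow, prod_hFace (fun s => (∏ i ∈ s, x i) ^ 2)]
    simp_rw [← prod_pow]
    rw [prod_prod_eq_prod_pow_card_filter fun s hs => (mem_powersetCard.1 hs).1]
    refine prod_congr rfl fun a ha => ?_
    rw [card_filter_mem_powersetCard ha, card_lowVertices, Nat.add_sub_cancel]
  have hprod : ∏ i, (x i ^ 2) ^ ((m - 1).choose j)
      = (∏ σ : HFace (m + 1) (j + 1), ∏ i ∈ σ.1, x i) ^ 2
        * (x (Fin.last m) ^ 2) ^ ((m - 1).choose j) := by
    rw [← hweights, lowVertices_succ, prod_erase_mul _ _ (mem_univ _)]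
  have hr : (m + 1 - 2).choose (j + 1) ≤ Fintype.card (HFace (m + 1) (j + 1)) := by
    rw [card_hFace]
    exact Nat.choose_le_choose _ (by omega)
  have hcard : Fintype.card (HFace (m + 1) (j + 1)) - (m + 1 - 2).choose (j + 1)
      = (m - 1).choose j := by
    rw [card_hFace, Nat.add_sub_cancel, hpascal, show m + 1 - 2 = m - 1 by omega,
      Nat.add_sub_cancel_left]
  rw [bdryHat_mul_diagonal_mul_transpose, det_mul, det_mul, det_diagonal,
    upLaplacian_isHermitian.det_add_smul_one_of_mul_self_eq_smul upLaplacian_mul_self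
      trace_upLaplacian hr, hcard, show m + 1 - 2 = m - 1 by omega, ← hsum, hprod]
  ring

end Determinant

/-- Kalai's generating function theorem: for every `x ∈ ℝⁿ`,
`Σ_{T : |T| = m₃} det(∂̂_{•,T})² ∏ᵢ (xᵢ²)^{dᵢ(T)} = (Σᵢ xᵢ²)^{m₂} ∏ᵢ (xᵢ²)^{m₁}`. -/
theorem genfunc (n k : ℕ) (hk : 1 ≤ k) (hn : k < n) (x : Fin n → ℝ) :
    ∑ T ∈ Finset.univ.filter
        (fun T : Finset (Face n (k+1)) => T.card = (n-1).choose k),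
        detSq (colSub (bdryHat n k) T) * ∏ i, (x i ^ 2) ^ (deg n k T i)
      = (∑ i, x i ^ 2) ^ ((n-2).choose k) *
          ∏ i, (x i ^ 2) ^ ((n-2).choose (k-1)) := by
  obtain ⟨j, rfl⟩ : ∃ j, k = j + 1 := ⟨k - 1, by omega⟩
  obtain ⟨m, rfl⟩ : ∃ m, n = m + 1 := ⟨n - 1, by omega⟩
  rw [show m + 1 - 2 = m - 1 by omega, show j + 1 - 1 = j by omega, ← card_hFace,
    ← det_bdryHat_mul_diagonal_mul_transpose (x := x) (by omega), det_mul_diagonal_mul_transpose]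
  refine sum_congr rfl fun T _ => ?_
  rw [prod_prod_eq_prod_pow_card_filter fun _ _ => subset_univ _]
  rfl
end

section
/- If T is a set of (k+1)-element subsets of [n] with |T| = m3 and det ∂̂_{•,T} ≠ 0 (i.e., T is a ℚ-acyclic complex), then m1 ≤ d_i(T) ≤ m3 for every vertex i ∈ [n]. -/
open Matrix

namespace DBAux

/-- Raw boundary entry. -/
noncomputable def E (n : ℕ) (s t : Finset (Fin n)) : ℝ :=
  ∑ a ∈ t, if s = t.erase a then (-1 : ℝ) ^ ((t.filter (fun b => b < a)).card) else 0

lemma E_eq_zero_of_mem_notMem {n : ℕ} {s t : Finset (Fin n)} {i : Fin n}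
    (hi : i ∈ s) (ht : i ∉ t) : E n s t = 0 := by
  refine Finset.sum_eq_zero fun a _ => ?_
  rw [if_neg]
  intro h
  exact ht (Finset.mem_of_mem_erase (h ▸ hi))

/-- the paired term in the double boundary sum -/
noncomputable def G (n : ℕ) (s t : Finset (Fin n)) (a b : Fin n) : ℝ :=
  (if s = (t.erase a).erase b then
    (-1 : ℝ) ^ (((t.erase a).filter (fun c => c < b)).card) else 0) *
  (-1 : ℝ) ^ ((t.filter (fun c => c < a)).card)

lemma G_pair_lt {n : ℕ} {t : Finset (Fin n)} {a b : Fin n} (hb : b ∈ t)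
    (hlt : b < a) (s : Finset (Fin n)) : G n s t a b + G n s t b a = 0 := by
  unfold G
  rw [Finset.erase_right_comm (a := a) (b := b)]
  by_cases h : s = (t.erase b).erase a
  · rw [if_pos h, if_pos h]
    have h1 : ((t.erase a).filter (fun c => c < b)).card = ((t.filter (fun c => c < b)).card) := by
      rw [Finset.filter_erase, Finset.erase_eq_of_notMem]
      simp only [Finset.mem_filter]
      rintro ⟨-, hab⟩
      exact absurd (hab.trans hlt) (lt_irrefl a)
    have h2 : ((t.erase b).filter (fun c => c < a)).card + 1 = (t.filter (fun c => c < a)).card := by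
      rw [Finset.filter_erase, Finset.card_erase_of_mem (by simp [hb, hlt])]
      have : 0 < (t.filter (fun c => c < a)).card :=
        Finset.card_pos.2 ⟨b, by simp [hb, hlt]⟩
      omega
    rw [h1, ← h2, pow_succ]
    ring
  · rw [if_neg h, if_neg h, zero_mul, zero_mul, add_zero]

lemma G_pair {n : ℕ} {t : Finset (Fin n)} {a b : Fin n} (ha : a ∈ t) (hb : b ∈ t)
    (hne : a ≠ b) (s : Finset (Fin n)) : G n s t a b + G n s t b a = 0 := by
  rcases lt_or_gt_of_ne hne with h | h
  · rw [add_comm]; exact G_pair_lt ha h s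
  · exact G_pair_lt hb h s

lemma ddzero (n : ℕ) (s t : Finset (Fin n)) :
    ∑ a ∈ t, ∑ b ∈ t.erase a, G n s t a b = 0 := by
  rw [← Finset.sum_sigma t (fun a => t.erase a) (fun p => G n s t p.1 p.2)]
  refine Finset.sum_involution (fun p _ => ⟨p.2, p.1⟩) ?_ ?_ ?_ ?_
  · intro p hp
    rw [Finset.mem_sigma] at hp
    obtain ⟨h1, h2⟩ := hp
    rw [Finset.mem_erase] at h2
    exact G_pair h1 h2.2 (Ne.symm h2.1) s
  · intro p hp hne
    rw [Finset.mem_sigma, Finset.mem_erase] at hp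
    intro hcontra
    have := congrArg Sigma.fst hcontra
    exact hp.2.1 this
  · intro p hp
    rw [Finset.mem_sigma, Finset.mem_erase] at hp ⊢
    exact ⟨hp.2.2, Ne.symm hp.2.1, hp.1⟩
  · intro p hp; rfl

lemma dd_row {n k : ℕ} (ρ : Finset (Fin n)) (τ : Face n (k+1))
    (hτ : ∀ a ∈ τ.1, (a : ℕ) < n - 1) :
    ∑ σ : HFace n k, E n ρ σ.1 * E n σ.1 τ.1 = 0 := by
  have step1 : ∀ σ : HFace n k, E n ρ σ.1 * E n σ.1 τ.1 =
      ∑ a ∈ τ.1, (if σ.1 = τ.1.erase a then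
        E n ρ σ.1 * (-1 : ℝ) ^ ((τ.1.filter (fun b => b < a)).card) else 0) := by
    intro σ
    have hE : E n σ.1 τ.1 = ∑ a ∈ τ.1,
        if σ.1 = τ.1.erase a then (-1 : ℝ) ^ ((τ.1.filter (fun b => b < a)).card) else 0 := rfl
    rw [hE, Finset.mul_sum]
    refine Finset.sum_congr rfl fun a _ => ?_
    split_ifs <;> simp
  simp_rw [step1]
  rw [Finset.sum_comm]
  have step2 : ∀ a ∈ τ.1, (∑ σ : HFace n k, if σ.1 = τ.1.erase a then
      E n ρ σ.1 * (-1 : ℝ) ^ ((τ.1.filter (fun b => b < a)).card) else 0) =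
      E n ρ (τ.1.erase a) * (-1 : ℝ) ^ ((τ.1.filter (fun b => b < a)).card) := by
    intro a ha
    have hcard : (τ.1.erase a).card = k := by
      rw [Finset.card_erase_of_mem ha, τ.2]; omega
    have hmem : ∀ b ∈ τ.1.erase a, (b : ℕ) < n - 1 :=
      fun b hb => hτ b (Finset.mem_of_mem_erase hb)
    refine (Finset.sum_eq_single (⟨τ.1.erase a, hcard, hmem⟩ : HFace n k) ?_ ?_).trans ?_
    · intro σ _ hσ
      rw [if_neg]
      intro h
      exact hσ (Subtype.ext h)
    · intro h; exact absurd (Finset.mem_univ _) h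
    · rw [if_pos rfl]
  rw [Finset.sum_congr rfl step2]
  have step3 : ∀ a ∈ τ.1, E n ρ (τ.1.erase a) * (-1 : ℝ) ^ ((τ.1.filter (fun b => b < a)).card)
      = ∑ b ∈ τ.1.erase a, G n ρ τ.1 a b := by
    intro a _
    rw [E, Finset.sum_mul]
    rfl
  rw [Finset.sum_congr rfl step3]
  exact ddzero n ρ τ.1

lemma card_add_card_le {ι A B : Type*} [Fintype ι] [DecidableEq ι] [Fintype A] [Fintype B]
    {u : A → ι → ℝ} {v : B → ι → ℝ} (hu : LinearIndependent ℝ u) (hv : LinearIndependent ℝ v)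
    (horth : ∀ a b, u a ⬝ᵥ v b = 0) :
    Fintype.card A + Fintype.card B ≤ Fintype.card ι := by
  have hsum : LinearIndependent ℝ (Sum.elim u v) := by
    refine hu.sum_type hv ?_
    rw [Submodule.disjoint_def]
    intro x hxu hxv
    have h1 : ∀ b, x ⬝ᵥ v b = 0 := by
      intro b
      let L : (ι → ℝ) →ₗ[ℝ] ℝ :=
        { toFun := fun y => y ⬝ᵥ v b
          map_add' := fun y z => add_dotProduct y z (v b)
          map_smul' := fun c y => by simp [smul_dotProduct] }
      have hle : Submodule.span ℝ (Set.range u) ≤ LinearMap.ker L := by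
        rw [Submodule.span_le]
        rintro _ ⟨a, rfl⟩
        simpa [L, LinearMap.mem_ker] using horth a b
      simpa [L, LinearMap.mem_ker] using hle hxu
    have h2 : x ⬝ᵥ x = 0 := by
      let L : (ι → ℝ) →ₗ[ℝ] ℝ :=
        { toFun := fun y => x ⬝ᵥ y
          map_add' := fun y z => dotProduct_add x y z
          map_smul' := fun c y => by simp [dotProduct_smul] }
      have hle : Submodule.span ℝ (Set.range v) ≤ LinearMap.ker L := by
        rw [Submodule.span_le]
        rintro _ ⟨b, rfl⟩
        simpa [L, LinearMap.mem_ker] using h1 b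
      simpa [L, LinearMap.mem_ker] using hle hxv
    exact dotProduct_self_eq_zero.1 h2
  have := hsum.fintype_card_le_finrank
  rwa [Fintype.card_sum, Module.finrank_pi] at this

lemma card_sub {n : ℕ} (j : ℕ) (B : Finset (Fin n)) :
    Fintype.card {s : Finset (Fin n) // s.card = j ∧ ∀ a ∈ s, a ∈ B} = B.card.choose j := by
  rw [Fintype.card_subtype]
  have h : (Finset.univ.filter fun s : Finset (Fin n) => s.card = j ∧ ∀ a ∈ s, a ∈ B)
      = B.powersetCard j := by
    ext s
    simp [Finset.mem_powersetCard, Finset.subset_iff, and_comm]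
  rw [h, Finset.card_powersetCard]

lemma card_filter_lt (n m : ℕ) (h : m < n) :
    (Finset.univ.filter (fun a : Fin n => (a : ℕ) < m)).card = m := by
  have h2 : (Finset.univ.filter (fun a : Fin n => (a : ℕ) < m)) = Finset.Iio (⟨m, h⟩ : Fin n) := by
    ext a; simp [Fin.lt_def]
  rw [h2, Fin.card_Iio]

lemma card_HFace {n k : ℕ} (hn : 0 < n) : Fintype.card (HFace n k) = (n-1).choose k := by
  rw [Fintype.card_congr (Equiv.subtypeEquivRight (q := fun s : Finset (Fin n) =>
      s.card = k ∧ ∀ a ∈ s, a ∈ Finset.univ.filter (fun a : Fin n => (a : ℕ) < n-1))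
      (by intro s; simp)), card_sub, card_filter_lt n (n-1) (by omega)]

lemma card_rho {n k : ℕ} (hn : 0 < n) :
    Fintype.card {ρ : Finset (Fin n) // ρ.card = k-1 ∧ ∀ a ∈ ρ, (a : ℕ) < n-2} =
      (n-2).choose (k-1) := by
  rw [Fintype.card_congr (Equiv.subtypeEquivRight (q := fun s : Finset (Fin n) =>
      s.card = k-1 ∧ ∀ a ∈ s, a ∈ Finset.univ.filter (fun a : Fin n => (a : ℕ) < n-2))
      (by intro s; simp)), card_sub, card_filter_lt n (n-2) (by omega)]

lemma card_rows_mem {n k : ℕ} (hk : 1 ≤ k) {i : Fin n} (hi : (i : ℕ) < n - 1) :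
    Fintype.card {σ : HFace n k // i ∈ σ.1.1} = (n-2).choose (k-1) := by
  classical
  set B : Finset (Fin n) := Finset.univ.filter (fun a : Fin n => (a : ℕ) < n-1) with hB
  have hiB : i ∈ B := by simp [hB, hi]
  have e : {σ : HFace n k // i ∈ σ.1.1} ≃
      {t : Finset (Fin n) // t.card = k-1 ∧ ∀ a ∈ t, a ∈ B.erase i} := {
    toFun := fun σ => ⟨σ.1.1.erase i, by
      refine ⟨by rw [Finset.card_erase_of_mem σ.2, σ.1.2.1], ?_⟩
      intro a ha
      rw [Finset.mem_erase] at ha ⊢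
      exact ⟨ha.1, by simp [hB, σ.1.2.2 a ha.2]⟩⟩
    invFun := fun t => by
      refine ⟨⟨insert i t.1, ?_, ?_⟩, Finset.mem_insert_self i t.1⟩
      · have hit : i ∉ t.1 := fun hit => (Finset.mem_erase.1 (t.2.2 i hit)).1 rfl
        rw [Finset.card_insert_of_notMem hit, t.2.1]; omega
      · intro a ha
        rcases Finset.mem_insert.1 ha with rfl | ha
        · exact hi
        · have := t.2.2 a ha
          rw [Finset.mem_erase] at this
          simpa [hB] using this.2
    left_inv := fun σ => by
      ext1; ext1
      exact Finset.insert_erase σ.2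
    right_inv := fun t => by
      ext1
      exact Finset.erase_insert (fun hit => (Finset.mem_erase.1 (t.2.2 i hit)).1 rfl) }
  rw [Fintype.card_congr e, card_sub, Finset.card_erase_of_mem hiB, hB,
    card_filter_lt n (n-1) (by omega)]
  have h12 : n - 1 - 1 = n - 2 := by omega
  rw [h12]

lemma card_cols {n k : ℕ} (T : Finset (Face n (k+1))) (i : Fin n) :
    Fintype.card {c : {τ // τ ∈ T} // i ∉ c.1.1.1} = T.card - deg n k T i := by
  classical
  have e : {c : {τ // τ ∈ T} // i ∉ c.1.1.1} ≃
      {τ // τ ∈ T.filter (fun τ => i ∉ τ.1)} := {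
    toFun := fun c => ⟨c.1.1, Finset.mem_filter.2 ⟨c.1.2, c.2⟩⟩
    invFun := fun τ => ⟨⟨τ.1, (Finset.mem_filter.1 τ.2).1⟩, (Finset.mem_filter.1 τ.2).2⟩
    left_inv := fun c => rfl
    right_inv := fun τ => rfl }
  rw [Fintype.card_congr e, Fintype.card_coe]
  have := Finset.card_filter_add_card_filter_not (s := T) (p := fun τ => i ∈ τ.1)
  unfold deg
  omega

lemma E_insert_self {n : ℕ} (v : Fin n) (ρ0 : Finset (Fin n)) (h0 : v ∉ ρ0) :
    E n ρ0 (insert v ρ0) ≠ 0 := by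
  rw [E, Finset.sum_insert h0]
  have h1 : ∑ a ∈ ρ0, (if ρ0 = (insert v ρ0).erase a then
      (-1 : ℝ) ^ (((insert v ρ0).filter (fun b => b < a)).card) else 0) = 0 := by
    refine Finset.sum_eq_zero fun a ha => ?_
    rw [if_neg]
    intro h
    have hv : v ∈ (insert v ρ0).erase a := by
      rw [Finset.mem_erase]
      exact ⟨fun hva => h0 (hva ▸ ha), Finset.mem_insert_self v ρ0⟩
    exact h0 (h ▸ hv)
  rw [if_pos (Finset.erase_insert h0).symm, h1, add_zero]
  positivity

lemma E_insert_ne {n : ℕ} (v : Fin n) (ρ ρ0 : Finset (Fin n)) (h : v ∉ ρ) (h0 : v ∉ ρ0)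
    (hne : ρ ≠ ρ0) : E n ρ (insert v ρ0) = 0 := by
  rw [E, Finset.sum_insert h0]
  have h1 : ∑ a ∈ ρ0, (if ρ = (insert v ρ0).erase a then
      (-1 : ℝ) ^ (((insert v ρ0).filter (fun b => b < a)).card) else 0) = 0 := by
    refine Finset.sum_eq_zero fun a ha => ?_
    rw [if_neg]
    intro hh
    have hv : v ∈ (insert v ρ0).erase a := by
      rw [Finset.mem_erase]
      exact ⟨fun hva => h0 (hva ▸ ha), Finset.mem_insert_self v ρ0⟩
    exact h (hh ▸ hv)
  rw [Finset.erase_insert h0, if_neg hne, h1, add_zero]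

end DBAux

/-- a ℚ-acyclic complex has all vertex degrees between
`m₁ = C(n-2,k-1)` and `m₃ = C(n-1,k)`. -/
theorem degree_bounds (n k : ℕ) (hk : 1 ≤ k) (hn : k < n)
    (T : Finset (Face n (k+1))) (hT : T.card = (n-1).choose k)
    (hdet : detSq (colSub (bdryHat n k) T) ≠ 0) (i : Fin n) :
    (n-2).choose (k-1) ≤ deg n k T i ∧ deg n k T i ≤ (n-1).choose k := by
  classical
  have hdegle : deg n k T i ≤ T.card := Finset.card_filter_le _ _
  refine ⟨?_, hT ▸ hdegle⟩
  simp only [detSq] at hdet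
  split_ifs at hdet with h
  swap
  · exact absurd rfl hdet
  set e := h.some with he
  have hdet0 : ((colSub (bdryHat n k) T).submatrix id e).det ≠ 0 := by
    intro hh; rw [hh] at hdet; simp at hdet
  have hA : IsUnit ((colSub (bdryHat n k) T).submatrix id e) :=
    (Matrix.isUnit_iff_isUnit_det _).2 (isUnit_iff_ne_zero.2 hdet0)
  have hcolsA : LinearIndependent ℝ (fun r => ((colSub (bdryHat n k) T).submatrix id e)ᵀ r) :=
    Matrix.linearIndependent_cols_iff_isUnit.2 hA
  have hcols : LinearIndependent ℝ
      (fun c : {τ // τ ∈ T} => fun σ => colSub (bdryHat n k) T σ c) := by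
    have h2 := hcolsA.comp e.symm e.symm.injective
    have h3 : (fun c : {τ // τ ∈ T} => fun σ => colSub (bdryHat n k) T σ c)
        = (fun r => ((colSub (bdryHat n k) T).submatrix id e)ᵀ r) ∘ e.symm := by
      funext c
      funext σ
      simp [Matrix.transpose_apply, Matrix.submatrix_apply]
    rw [h3]
    exact h2
  have hv : LinearIndependent ℝ (fun c : {c : {τ // τ ∈ T} // i ∉ c.1.1.1} =>
      fun σ => colSub (bdryHat n k) T σ c.1) :=
    hcols.comp Subtype.val Subtype.val_injective
  by_cases hi : (i : ℕ) < n - 1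
  · -- i is not the last vertex
    have hu : LinearIndependent ℝ (fun σ0 : {σ : HFace n k // i ∈ σ.1.1} =>
        (Pi.single σ0.1 1 : HFace n k → ℝ)) := by
      have hb := (Pi.basisFun ℝ (HFace n k)).linearIndependent.comp
        (Subtype.val : {σ : HFace n k // i ∈ σ.1.1} → HFace n k) Subtype.val_injective
      have heq : (fun σ0 : {σ : HFace n k // i ∈ σ.1.1} =>
          (Pi.single σ0.1 1 : HFace n k → ℝ))
          = fun σ0 : {σ : HFace n k // i ∈ σ.1.1} => (Pi.basisFun ℝ (HFace n k)) σ0.1 := by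
        funext σ0
        rw [Pi.basisFun_apply]
      rw [heq]
      exact hb
    have horth : ∀ (a : {σ : HFace n k // i ∈ σ.1.1}) (b : {c : {τ // τ ∈ T} // i ∉ c.1.1.1}),
        (Pi.single a.1 1 : HFace n k → ℝ) ⬝ᵥ (fun σ => colSub (bdryHat n k) T σ b.1) = 0 := by
      intro a b
      rw [single_dotProduct, one_mul]
      exact DBAux.E_eq_zero_of_mem_notMem a.2 b.2
    have hle := DBAux.card_add_card_le hu hv horth
    rw [DBAux.card_rows_mem hk hi, DBAux.card_cols T i, DBAux.card_HFace (by omega)] at hle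
    omega
  · -- i is the last vertex
    have hival : (i : ℕ) = n - 1 := by have := i.2; omega
    set vtx : Fin n := ⟨n-2, by omega⟩ with hvtx
    have hvtx_not : ∀ (ρ : Finset (Fin n)), (∀ a ∈ ρ, (a : ℕ) < n-2) → vtx ∉ ρ := by
      intro ρ hρ hmem
      have := hρ vtx hmem
      rw [hvtx] at this
      simp at this
    have hu : LinearIndependent ℝ
        (fun ρ : {ρ : Finset (Fin n) // ρ.card = k-1 ∧ ∀ a ∈ ρ, (a : ℕ) < n-2} =>
          fun σ : HFace n k => DBAux.E n ρ.1 σ.1) := by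
      rw [Fintype.linearIndependent_iff]
      intro g hg ρ0
      have hσρ0 : (insert vtx ρ0.1).card = k ∧ ∀ a ∈ insert vtx ρ0.1, (a : ℕ) < n - 1 := by
        constructor
        · rw [Finset.card_insert_of_notMem (hvtx_not _ ρ0.2.2), ρ0.2.1]; omega
        · intro a ha
          rcases Finset.mem_insert.1 ha with rfl | ha
          · rw [hvtx]; simp; omega
          · have := ρ0.2.2 a ha; omega
      set σ0 : HFace n k := ⟨insert vtx ρ0.1, hσρ0⟩ with hσ0
      have heval := congrFun hg σ0
      rw [Finset.sum_apply] at heval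
      simp only [Pi.smul_apply, smul_eq_mul, Pi.zero_apply] at heval
      rw [Finset.sum_eq_single ρ0 ?_ ?_] at heval
      · have hEne : DBAux.E n ρ0.1 σ0.1 ≠ 0 :=
          DBAux.E_insert_self vtx ρ0.1 (hvtx_not _ ρ0.2.2)
        exact (mul_eq_zero.1 heval).resolve_right hEne
      · intro ρ _ hρne
        have hzero : DBAux.E n ρ.1 σ0.1 = 0 :=
          DBAux.E_insert_ne vtx ρ.1 ρ0.1 (hvtx_not _ ρ.2.2) (hvtx_not _ ρ0.2.2)
            (fun hh => hρne (Subtype.ext hh))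
        rw [hzero, mul_zero]
      · intro hh; exact absurd (Finset.mem_univ _) hh
    have horth : ∀ (a : {ρ : Finset (Fin n) // ρ.card = k-1 ∧ ∀ x ∈ ρ, (x : ℕ) < n-2})
        (b : {c : {τ // τ ∈ T} // i ∉ c.1.1.1}),
        (fun σ : HFace n k => DBAux.E n a.1 σ.1) ⬝ᵥ
          (fun σ => colSub (bdryHat n k) T σ b.1) = 0 := by
      intro a b
      have hτ : ∀ x ∈ b.1.1.1, (x : ℕ) < n - 1 := by
        intro x hx
        have hxne : x ≠ i := fun hxi => b.2 (hxi ▸ hx)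
        have hxlt := x.2
        have hxne' : (x : ℕ) ≠ n - 1 := by
          intro hh
          exact hxne (Fin.ext (by rw [hh, hival]))
        omega
      exact DBAux.dd_row a.1 b.1.1 hτ
    have hle := DBAux.card_add_card_le hu hv horth
    rw [DBAux.card_rho (by omega), DBAux.card_cols T i, DBAux.card_HFace (by omega)] at hle
    omega
end

section
/- Let M be a real r × N matrix such that MMᵗ is invertible, and let P := Mᵗ(MMᵗ)⁻¹M. Then for every subset B of the column index set, the sum over all r-element column subsets T with T ⊇ B of det(M_{•,T})² equals det(MMᵗ) · det(P_{B,B}). Equivalently, for the determinantal probability measure μ(T) = det(M_{•,T})²/det(MMᵗ) on r-element column subsets, μ({T : T ⊇ B}) = det P_{B,B}. -/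
open Matrix

/-!
Weight column `s` of `M` by `X` if `s ∈ B` and by `1` otherwise, i.e. put
`D = diagonal (if s ∈ B then X else 1)` over `ℝ[X]`. By the Cauchy–Binet formula
`det (M D Mᵀ) = ∑_{|T| = r} det (M_{•,T})² X ^ |T ∩ B|`, so its coefficient of `X ^ |B|` is the sum
over `T ⊇ B`. On the other hand `M D Mᵀ = MMᵀ + (X - 1) M_{•,B} M_{•,B}ᵀ`, and by the matrix
determinant lemma its determinant is `det (MMᵀ) * det (X • P_{B,B} + (1 - P_{B,B}))`, whose
coefficient of `X ^ |B|` is `det (MMᵀ) * det P_{B,B}`.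
-/

open Finset Polynomial

namespace Matrix

section Semiring

variable {m n S R : Type*} [Fintype S] [DecidableEq S] [NonAssocSemiring R]

theorem mul_diagonal_indicator_mul_transpose (L : Matrix m S R) (N : Matrix n S R)
    (T : Finset S) :
    L * diagonal ((T : Set S).indicator (1 : S → R)) * Nᵀ
      = L.submatrix id ((↑) : T → S) * (N.submatrix id ((↑) : T → S))ᵀ := by
  ext i j
  rw [mul_apply, mul_apply]
  simp only [mul_diagonal, transpose_apply, submatrix_apply, id_eq, Set.indicator_apply, mem_coe,
    Pi.one_apply, mul_ite, mul_one, mul_zero, ite_mul, zero_mul, sum_ite_mem, univ_inter]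
  exact (sum_coe_sort T fun s => L i s * N j s).symm

end Semiring

theorem det_submatrix_eq_zero_of_not_injective {ι S R : Type*} [Fintype ι] [DecidableEq ι]
    [CommRing R] (N : Matrix ι S R) {f : ι → S}
    (hf : ¬ Function.Injective f) : (N.submatrix id f).det = 0 := by
  obtain ⟨i, j, hij, hne⟩ : ∃ i j, f i = f j ∧ i ≠ j := by
    simpa [Function.Injective] using hf
  exact det_zero_of_column_eq hne fun k => by simp [hij]

theorem det_mul_diagonal_mul_transpose_eq_sum_fun {ι S R : Type*} [Fintype ι] [DecidableEq ι]
    [Fintype S] [DecidableEq S] [CommRing R] (L N : Matrix ι S R) (d : S → R) :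
    (L * diagonal d * Nᵀ).det
      = ∑ f : ι → S, (∏ i, L i (f i) * d (f i)) * (N.submatrix id f).det := by
  have hrows : L * diagonal d * Nᵀ = of fun i => ∑ s, (L i s * d s) • fun j => N j s := by
    ext i j
    rw [mul_apply]
    simp only [mul_diagonal, transpose_apply, of_apply, Finset.sum_apply, Pi.smul_apply,
      smul_eq_mul]
  calc (L * diagonal d * Nᵀ).det
      = detRowAlternating.toMultilinearMap fun i => ∑ s, (L i s * d s) • fun j => N j s := by
        rw [hrows]; rfl
    _ = _ := by
      rw [MultilinearMap.map_sum]
      refine sum_congr rfl fun f _ => ?_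
      rw [MultilinearMap.map_smul_univ, smul_eq_mul, ← det_transpose]
      rfl

variable {ι S R : Type*} [Fintype ι] [DecidableEq ι] [Fintype S] [DecidableEq S] [CommRing R]

def binetTerm (L N : Matrix ι S R) (T : Finset S) : R :=
  ∑ f : ι → S with univ.image f = T, (∏ i, L i (f i)) * (N.submatrix id f).det

theorem det_mul_diagonal_mul_transpose_eq_sum_binetTerm (L N : Matrix ι S R) (d : S → R) :
    (L * diagonal d * Nᵀ).det = ∑ T : Finset S, (∏ s ∈ T, d s) * binetTerm L N T := by
  have hterm : ∀ f : ι → S, (∏ i, L i (f i) * d (f i)) * (N.submatrix id f).det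
      = (∏ s ∈ univ.image f, d s) * ((∏ i, L i (f i)) * (N.submatrix id f).det) := by
    intro f
    by_cases hf : Function.Injective f
    · rw [prod_image fun i _ j _ h => hf h, prod_mul_distrib]
      ring
    · simp [det_submatrix_eq_zero_of_not_injective N hf]
  simp_rw [det_mul_diagonal_mul_transpose_eq_sum_fun, hterm, binetTerm, mul_sum]
  rw [← sum_fiberwise univ (fun f : ι → S => univ.image f)]
  refine sum_congr rfl fun T _ => sum_congr rfl fun f hf => ?_
  rw [(mem_filter.mp hf).2]

theorem binetTerm_eq_zero_of_card_ne (L N : Matrix ι S R) {T : Finset S}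
    (hT : #T ≠ Fintype.card ι) : binetTerm L N T = 0 := by
  refine sum_eq_zero fun f hf => ?_
  have hf : ¬ Function.Injective f := fun hinj =>
    hT (by rw [← (mem_filter.mp hf).2, card_image_of_injective _ hinj, card_univ])
  rw [det_submatrix_eq_zero_of_not_injective N hf, mul_zero]

theorem binetTerm_eq_det (L N : Matrix ι S R) {T : Finset S} (hT : #T = Fintype.card ι) :
    binetTerm L N T = (L * diagonal ((T : Set S).indicator (1 : S → R)) * Nᵀ).det := by
  rw [det_mul_diagonal_mul_transpose_eq_sum_binetTerm, sum_eq_single T]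
  · rw [prod_eq_one fun s hs => Set.indicator_of_mem (mem_coe.2 hs) 1, one_mul]
  · intro T' _ hne
    by_cases hT' : #T' = Fintype.card ι
    · obtain ⟨s, hsT', hsT⟩ : ∃ s ∈ T', s ∉ T :=
        not_subset.mp fun hsub => hne (eq_of_subset_of_card_le hsub (by omega))
      rw [prod_eq_zero hsT' (Set.indicator_of_notMem (mt mem_coe.1 hsT) 1), zero_mul]
    · rw [binetTerm_eq_zero_of_card_ne L N hT', mul_zero]
  · simp

theorem det_mul_diagonal_mul_transpose (L N : Matrix ι S R) (d : S → R) :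
    (L * diagonal d * Nᵀ).det
      = ∑ T with #T = Fintype.card ι,
          (∏ s ∈ T, d s) * (L * diagonal ((T : Set S).indicator (1 : S → R)) * Nᵀ).det := by
  rw [det_mul_diagonal_mul_transpose_eq_sum_binetTerm, sum_filter]
  refine sum_congr rfl fun T _ => ?_
  split_ifs with hT
  · rw [binetTerm_eq_det L N hT]
  · rw [binetTerm_eq_zero_of_card_ne L N hT, mul_zero]

theorem map_C_mul_diagonal_X_mul_transpose {m : Type*} (L N : Matrix m S R)
    (B : Finset S) :
    L.map C * diagonal (fun s => if s ∈ B then (X : R[X]) else 1) * (N.map C)ᵀ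
      = (L * Nᵀ).map C
        + (X - 1 : R[X]) • (L * diagonal ((B : Set S).indicator (1 : S → R)) * Nᵀ).map C := by
  have hdiag : diagonal (fun s => if s ∈ B then (X : R[X]) else 1)
      = 1 + (X - 1 : R[X]) • (diagonal ((B : Set S).indicator (1 : S → R))).map C := by
    ext s t : 2
    by_cases hst : s = t
    · subst hst
      by_cases hs : s ∈ B <;> simp [hs]
    · simp [diagonal_apply_ne _ hst, one_apply_ne hst]
  rw [hdiag, Matrix.mul_add, Matrix.add_mul, Matrix.mul_one, Matrix.mul_smul, Matrix.smul_mul,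
    ← transpose_map, ← Matrix.map_mul, ← Matrix.map_mul, ← Matrix.map_mul]

theorem coeff_det_map_C_mul_diagonal_X_mul_transpose (L N : Matrix ι S R) (B : Finset S) :
    (L.map C * diagonal (fun s => if s ∈ B then (X : R[X]) else 1) * (N.map C)ᵀ).det.coeff #B
      = ∑ T with #T = Fintype.card ι ∧ B ⊆ T,
          (L * diagonal ((T : Set S).indicator (1 : S → R)) * Nᵀ).det := by
  rw [det_mul_diagonal_mul_transpose, finsetSum_coeff, ← filter_filter, sum_filter (B ⊆ ·)]
  refine sum_congr rfl fun T _ => ?_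
  have hprod : ∏ s ∈ T, (if s ∈ B then X else 1 : R[X]) = X ^ #(T ∩ B) := by
    rw [prod_ite_mem, prod_const]
  have hmap : L.map C * diagonal ((T : Set S).indicator (1 : S → R[X])) * (N.map C)ᵀ
      = (L * diagonal ((T : Set S).indicator (1 : S → R)) * Nᵀ).map C := by
    rw [Matrix.map_mul, Matrix.map_mul, transpose_map, diagonal_map C.map_zero]
    congr 3 with s
    by_cases hs : s ∈ T <;> simp [hs]
  have hcard : #B = #(T ∩ B) ↔ B ⊆ T :=
    ⟨fun h => inter_eq_right.mp (eq_of_subset_of_card_le inter_subset_right h.le),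
      fun h => by rw [inter_eq_right.mpr h]⟩
  rw [hprod, hmap, ← RingHom.mapMatrix_apply, ← RingHom.map_det, mul_comm, coeff_C_mul_X_pow]
  exact if_congr hcard rfl rfl

theorem coeff_det_map_C_add_X_sub_one_smul {m n : Type*} [Fintype m] [DecidableEq m]
    [Fintype n] [DecidableEq n] {A : Matrix m m R} (hA : IsUnit A.det) (U : Matrix m n R)
    (V : Matrix n m R) :
    (A.map C + (X - 1 : R[X]) • (U * V).map C).det.coeff (Fintype.card n)
      = A.det * (V * A⁻¹ * U).det := by
  have hfactor : A.map C + (X - 1 : R[X]) • (U * V).map C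
      = A.map C * (1 + ((X - 1 : R[X]) • (A⁻¹ * U).map C) * V.map C) := by
    rw [Matrix.mul_add, Matrix.mul_one, Matrix.smul_mul, Matrix.mul_smul, ← Matrix.map_mul,
      ← Matrix.map_mul, ← Matrix.mul_assoc, ← Matrix.mul_assoc, mul_nonsing_inv A hA,
      Matrix.one_mul]
  have hcomm : (1 + ((X - 1 : R[X]) • (A⁻¹ * U).map C) * V.map C).det
      = ((X : R[X]) • (V * A⁻¹ * U).map C + (1 - V * A⁻¹ * U).map C).det := by
    have hsub : (1 - V * A⁻¹ * U).map C = 1 - (V * A⁻¹ * U).map C := by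
      rw [Matrix.map_sub _ (map_sub C), Matrix.map_one _ C.map_zero C.map_one]
    rw [det_one_add_mul_comm, Matrix.mul_smul, ← Matrix.map_mul, ← Matrix.mul_assoc, hsub,
      sub_smul, one_smul]
    abel_nf
  rw [hfactor, det_mul, ← RingHom.mapMatrix_apply, ← RingHom.map_det, coeff_C_mul, hcomm,
    coeff_det_X_add_C_card]

end Matrix

theorem detSq_colSub {m S : Type*} [Fintype m] [DecidableEq m] [Fintype S] [DecidableEq S]
    (M : Matrix m S ℝ) {T : Finset S} (hT : #T = Fintype.card m) :
    detSq (colSub M T) = (M * diagonal ((T : Set S).indicator (1 : S → ℝ)) * Mᵀ).det := by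
  have e : m ≃ T := Fintype.equivOfCardEq (by rw [Fintype.card_coe, hT])
  rw [detSq, dif_pos ⟨e⟩, mul_diagonal_indicator_mul_transpose, sq]
  nth_rw 2 [← det_transpose]
  rw [← det_mul, transpose_submatrix, submatrix_mul_equiv, submatrix_id_id]
  rfl

/-- determinantal measures: if `MMᵗ` is invertible and
`P = Mᵗ(MMᵗ)⁻¹M`, then `Σ_{T ⊇ B, |T| = r} det(M_{•,T})² = det(MMᵗ) · det P_{B,B}`;
equivalently, the determinantal measure of `{T : T ⊇ B}` equals `det P_{B,B}`. -/
theorem determinantal_measure {S : Type*} [Fintype S] [DecidableEq S]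
    (r : ℕ) (M : Matrix (Fin r) S ℝ) (hM : IsUnit (M * Mᵀ)) (B : Finset S) :
    (∑ T ∈ Finset.univ.filter (fun T : Finset S => T.card = r ∧ B ⊆ T),
        detSq (colSub M T)
      = (M * Mᵀ).det *
        ((Mᵀ * (M * Mᵀ)⁻¹ * M).submatrix
          (fun b : B => (b : S)) (fun b : B => (b : S))).det) ∧
    (∑ T ∈ Finset.univ.filter (fun T : Finset S => T.card = r ∧ B ⊆ T),
        detSq (colSub M T) / (M * Mᵀ).det
      = ((Mᵀ * (M * Mᵀ)⁻¹ * M).submatrix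
          (fun b : B => (b : S)) (fun b : B => (b : S))).det) := by
  have hA : IsUnit (M * Mᵀ).det := (isUnit_iff_isUnit_det _).mp hM
  set MB : Matrix (Fin r) B ℝ := M.submatrix id (↑)
  have hP : MBᵀ * (M * Mᵀ)⁻¹ * MB = (Mᵀ * (M * Mᵀ)⁻¹ * M).submatrix (↑) (↑) := by
    ext
    simp [MB, mul_apply]
  have hsum : ∑ T with #T = r ∧ B ⊆ T, detSq (colSub M T)
      = (M * Mᵀ).det * ((Mᵀ * (M * Mᵀ)⁻¹ * M).submatrix ((↑) : B → S) (↑)).det := by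
    calc ∑ T with #T = r ∧ B ⊆ T, detSq (colSub M T)
        = ∑ T with #T = Fintype.card (Fin r) ∧ B ⊆ T,
            (M * diagonal ((T : Set S).indicator (1 : S → ℝ)) * Mᵀ).det := by
          rw [Fintype.card_fin]
          exact sum_congr rfl fun T hT => detSq_colSub M (by simpa using (mem_filter.mp hT).2.1)
      _ = ((M * Mᵀ).map C + (X - 1 : ℝ[X]) • (MB * MBᵀ).map C).det.coeff (Fintype.card B) := by
          rw [← coeff_det_map_C_mul_diagonal_X_mul_transpose, map_C_mul_diagonal_X_mul_transpose,
            mul_diagonal_indicator_mul_transpose, Fintype.card_coe]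
      _ = _ := by rw [coeff_det_map_C_add_X_sub_one_smul hA, hP]
  exact ⟨hsum, by rw [← sum_div, hsum, mul_div_cancel_left₀ _ hA.ne_zero]⟩
end

section
/- Let x ∈ ℝⁿ have all coordinates nonzero and let P^x := (∂̂ X_k)ᵗ (∂̂ X_k² ∂̂ᵗ)⁻¹ (∂̂ X_k). Then for every (k+1)-element subset τ of [n], the diagonal entry satisfies P^x(τ,τ) = z⁻¹ · Σ_{i∈τ} x_i². -/
open Matrix

/-!
Write `∂ₓ = ∑ₐ xₐ ι_a` for the weighted boundary, where `ι_a` is the contraction by `e_a` on the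
exterior algebra of `ℝⁿ`. The relations `ι_a ι_b + ι_b ι_a = 0` and `ι_aᵀ ι_b + ι_b ι_aᵀ = δ_ab`
give `∂ₓ ∂ₓ = 0` and `∂ₓᵀ ∂ₓ + ∂ₓ ∂ₓᵀ = z`, so on `(k+1)`-faces `G = 1 - z⁻¹ ∂ₓ ∂ₓᵀ` is an
orthogonal projection with `G(τ,τ) = z⁻¹ ∑_{i∈τ} xᵢ²`. Since `∂ X_{k+1} = X_k ∂ₓ`, the rows of
`∂̂ X_{k+1}` are multiples of rows of `∂ₓ`, which `G` fixes because `∂ₓ ∂ₓ = 0`; hence the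
projection `P^x` onto their span satisfies `P^x ≤ G`. Both have trace `C(n-1, k)`: `P^x` because
`∂̂ X_{k+1}` has full row rank, `G` by double counting. So `G - P^x` is a projection of trace
zero, i.e. `P^x = G`.
-/

open Finset

namespace Matrix

theorem isSymm_mul_transpose {ι κ : Type*} [Fintype κ] (A : Matrix ι κ ℝ) : (A * Aᵀ).IsSymm := by
  rw [IsSymm, transpose_mul, transpose_transpose]

theorem isSymm_one_sub_smul_mul_transpose {ι κ : Type*} [Fintype κ] [DecidableEq ι]
    (N : Matrix ι κ ℝ) (c : ℝ) : (1 - c⁻¹ • (N * Nᵀ)).IsSymm :=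
  isSymm_one.sub ((isSymm_mul_transpose N).smul _)

variable {m ι κ : Type*} [Fintype m] [DecidableEq m] [Fintype ι] [Fintype κ]

theorem eq_of_isIdempotentElem_of_trace_eq {P G : Matrix ι ι ℝ} (hP : IsIdempotentElem P)
    (hG : IsIdempotentElem G) (hPs : P.IsSymm) (hGs : G.IsSymm) (hPG : P * G = P)
    (htr : P.trace = G.trace) : P = G := by
  have hGP : G * P = P := by
    simpa only [transpose_mul, hPs.eq, hGs.eq] using congr_arg transpose hPG
  have hH : (G - P)ᴴ * (G - P) = G - P := by
    rw [conjTranspose_eq_transpose_of_trivial, transpose_sub, hPs.eq, hGs.eq, sub_mul, mul_sub,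
      mul_sub, hG.eq, hP.eq, hGP, hPG]
    abel
  have : ((G - P)ᴴ * (G - P)).trace = 0 := by rw [hH, trace_sub, htr, sub_self]
  exact (sub_eq_zero.mp (trace_conjTranspose_mul_self_eq_zero_iff.mp this)).symm

theorem isUnit_det_mul_transpose_of_pivot (A : Matrix m ι ℝ) (c : m → ι)
    (hc : ∀ i, A i (c i) ≠ 0) (hc' : ∀ i i', i' ≠ i → A i' (c i) = 0) :
    IsUnit (A * Aᵀ).det := by
  rw [isUnit_iff_ne_zero, Ne, ← exists_vecMul_eq_zero_iff]
  rintro ⟨v, hv, hvA⟩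
  rw [← conjTranspose_eq_transpose_of_trivial, vecMul_self_mul_conjTranspose_eq_zero] at hvA
  refine hv (funext fun i => ?_)
  have hi := congr_fun hvA (c i)
  rw [vecMul, dotProduct, sum_eq_single i (fun i' _ h => by rw [hc' i i' h, mul_zero])
    (by simp)] at hi
  exact (mul_eq_zero.mp hi).resolve_right (hc i)

-- Meaningful only when `A` has full row rank: otherwise `(A * Aᵀ)⁻¹` is junk.
noncomputable def rowSpaceProj (A : Matrix m ι ℝ) : Matrix ι ι ℝ := Aᵀ * (A * Aᵀ)⁻¹ * A

variable {A : Matrix m ι ℝ}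

theorem isIdempotentElem_rowSpaceProj (hA : IsUnit (A * Aᵀ).det) :
    IsIdempotentElem (rowSpaceProj A) := by
  unfold IsIdempotentElem rowSpaceProj
  calc Aᵀ * (A * Aᵀ)⁻¹ * A * (Aᵀ * (A * Aᵀ)⁻¹ * A)
      = Aᵀ * ((A * Aᵀ)⁻¹ * (A * Aᵀ)) * (A * Aᵀ)⁻¹ * A := by simp only [Matrix.mul_assoc]
    _ = Aᵀ * (A * Aᵀ)⁻¹ * A := by rw [nonsing_inv_mul _ hA, Matrix.mul_one]

theorem isSymm_rowSpaceProj : (rowSpaceProj A).IsSymm := by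
  rw [IsSymm, rowSpaceProj, transpose_mul, transpose_mul, transpose_transpose,
    transpose_nonsing_inv, (isSymm_mul_transpose A).eq, Matrix.mul_assoc]

theorem trace_rowSpaceProj (hA : IsUnit (A * Aᵀ).det) :
    (rowSpaceProj A).trace = Fintype.card m := by
  rw [rowSpaceProj, trace_mul_comm, ← Matrix.mul_assoc, mul_nonsing_inv _ hA, trace_one]

theorem rowSpaceProj_mul_of_mul_eq {G : Matrix ι ι ℝ} (hG : A * G = A) :
    rowSpaceProj A * G = rowSpaceProj A := by
  rw [rowSpaceProj, Matrix.mul_assoc, hG]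

theorem rowSpaceProj_eq_of_trace_eq {G : Matrix ι ι ℝ} (hA : IsUnit (A * Aᵀ).det)
    (hG : IsIdempotentElem G) (hGs : G.IsSymm) (hAG : A * G = A)
    (htr : G.trace = Fintype.card m) : rowSpaceProj A = G :=
  eq_of_isIdempotentElem_of_trace_eq (isIdempotentElem_rowSpaceProj hA) hG isSymm_rowSpaceProj
    hGs (rowSpaceProj_mul_of_mul_eq hAG) (by rw [trace_rowSpaceProj hA, htr])

variable [DecidableEq ι]

theorem isIdempotentElem_one_sub_smul_mul_transpose {N : Matrix ι κ ℝ} {c : ℝ} (hc : c ≠ 0)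
    (hN : N * Nᵀ * N = c • N) : IsIdempotentElem (1 - c⁻¹ • (N * Nᵀ)) := by
  refine IsIdempotentElem.one_sub ?_
  unfold IsIdempotentElem
  rw [smul_mul_smul_comm, ← Matrix.mul_assoc, hN, smul_mul, smul_smul, mul_assoc,
    inv_mul_cancel₀ hc, mul_one]

end Matrix

theorem Finset.notMem_and_eq_insert_iff {α : Type*} [DecidableEq α] {a : α} {s t : Finset α} :
    a ∉ s ∧ t = insert a s ↔ a ∈ t ∧ s = t.erase a := by
  constructor
  · rintro ⟨ha, rfl⟩
    exact ⟨mem_insert_self a s, (erase_insert ha).symm⟩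
  · rintro ⟨ha, rfl⟩
    exact ⟨notMem_erase a t, (insert_erase ha).symm⟩

section WeightedBoundary

variable {n j : ℕ}

noncomputable def insertSign (s : Finset (Fin n)) (a : Fin n) : ℝ := (-1) ^ #{c ∈ s | c < a}

theorem insertSign_mul_self (s : Finset (Fin n)) (a : Fin n) :
    insertSign s a * insertSign s a = 1 := by
  rw [insertSign, ← pow_add, ← two_mul, pow_mul, neg_one_sq, one_pow]

theorem insertSign_insert {s : Finset (Fin n)} {a b : Fin n} (hb : b ∉ s) :
    insertSign (insert b s) a = (if b < a then -1 else 1) * insertSign s a := by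
  unfold insertSign
  rw [filter_insert]
  split_ifs with h
  · rw [card_insert_of_notMem (fun hb' => hb (mem_filter.mp hb').1), pow_succ, mul_comm]
  · rw [one_mul]

theorem insertSign_mul_insertSign_insert_add {s : Finset (Fin n)} {a b : Fin n} (ha : a ∉ s)
    (hb : b ∉ s) (hab : a ≠ b) :
    insertSign s a * insertSign (insert a s) b + insertSign s b * insertSign (insert b s) a =
      0 := by
  rw [insertSign_insert ha, insertSign_insert hb]
  rcases hab.lt_or_gt with h | h <;> simp [h, h.not_gt] <;> ring

theorem insertSign_insert_mul_insertSign_insert {s : Finset (Fin n)} {a b : Fin n} (ha : a ∉ s)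
    (hb : b ∉ s) (hab : a ≠ b) :
    insertSign (insert a s) b * insertSign (insert b s) a = -(insertSign s a * insertSign s b) := by
  rw [insertSign_insert ha, insertSign_insert hb]
  rcases hab.lt_or_gt with h | h <;> simp [h, h.not_gt] <;> ring

-- The coefficient of `e_t` in `e_a ∧ e_s`, where `e_s` is the wedge of the elements of `s` in
-- increasing order.
noncomputable def wedgeCoeff (a : Fin n) (s t : Finset (Fin n)) : ℝ :=
  if a ∉ s ∧ t = insert a s then insertSign s a else 0

theorem wedgeCoeff_insert_self {a : Fin n} {s t : Finset (Fin n)} (hs : a ∉ s) :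
    wedgeCoeff a t (insert a s) = if t = s then insertSign s a else 0 := by
  unfold wedgeCoeff
  by_cases hts : t = s
  · subst hts
    simp [hs]
  · rw [if_neg hts, if_neg]
    rintro ⟨ht, h⟩
    exact hts (by rw [← erase_insert ht, ← h, erase_insert hs])

theorem wedgeCoeff_insert_of_ne {a b : Fin n} {s t : Finset (Fin n)} (hab : a ≠ b) (ht : b ∉ t) :
    wedgeCoeff a t (insert b s) = 0 := by
  rw [wedgeCoeff, if_neg]
  rintro ⟨-, h⟩
  have hb : b ∈ insert a t := h ▸ mem_insert_self b s
  rcases mem_insert.mp hb with h' | h'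
  · exact hab h'.symm
  · exact ht h'

-- The matrix of the contraction `ι_a : Λ^(j+1) → Λ^j`, the adjoint of `e_a ∧ ·`.
noncomputable def contr (j : ℕ) (a : Fin n) : Matrix (Face n j) (Face n (j+1)) ℝ :=
  fun σ τ => wedgeCoeff a σ.1 τ.1

theorem sum_contr_mul_col (a : Fin n) (τ : Face n (j+1)) (g : Finset (Fin n) → ℝ) :
    ∑ σ, contr j a σ τ * g σ.1 =
      if a ∈ τ.1 then insertSign (τ.1.erase a) a * g (τ.1.erase a) else 0 := by
  simp only [contr, wedgeCoeff, notMem_and_eq_insert_iff]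
  split_ifs with ha
  · have hcard : #(τ.1.erase a) = j := by rw [card_erase_of_mem ha, τ.2, Nat.add_sub_cancel]
    rw [sum_eq_single ⟨τ.1.erase a, hcard⟩ (fun σ _ hσ => by
      rw [if_neg (fun h => hσ (Subtype.ext h.2)), zero_mul]) (by simp)]
    simp [ha]
  · exact sum_eq_zero fun σ _ => by rw [if_neg (fun h => ha h.1), zero_mul]

theorem sum_contr_mul_row (a : Fin n) (σ : Face n j) (g : Finset (Fin n) → ℝ) :
    ∑ τ, contr j a σ τ * g τ.1 =
      if a ∉ σ.1 then insertSign σ.1 a * g (insert a σ.1) else 0 := by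
  simp only [contr, wedgeCoeff]
  split_ifs with ha
  · exact sum_eq_zero fun τ _ => by rw [if_neg (fun h => h.1 ha), zero_mul]
  · have hcard : #(insert a σ.1) = j + 1 := by rw [card_insert_of_notMem ha, σ.2]
    rw [sum_eq_single ⟨insert a σ.1, hcard⟩ (fun τ _ hτ => by
      rw [if_neg (fun h => hτ (Subtype.ext h.2)), zero_mul]) (by simp)]
    simp [ha]

theorem contr_mul_contr_apply (a b : Fin n) (σ : Face n j) (γ : Face n (j+2)) :
    (contr j a * contr (j+1) b) σ γ =
      if a ∉ σ.1 then insertSign σ.1 a * wedgeCoeff b (insert a σ.1) γ.1 else 0 :=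
  sum_contr_mul_row a σ (fun t => wedgeCoeff b t γ.1)

theorem transpose_contr_mul_contr_apply (a b : Fin n) (τ τ' : Face n (j+1)) :
    ((contr j a)ᵀ * contr j b) τ τ' =
      if a ∈ τ.1 then insertSign (τ.1.erase a) a * wedgeCoeff b (τ.1.erase a) τ'.1 else 0 :=
  sum_contr_mul_col a τ (fun s => wedgeCoeff b s τ'.1)

theorem contr_mul_transpose_contr_apply (a b : Fin n) (τ τ' : Face n j) :
    (contr j b * (contr j a)ᵀ) τ τ' =
      if b ∉ τ.1 then insertSign τ.1 b * wedgeCoeff a τ'.1 (insert b τ.1) else 0 :=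
  sum_contr_mul_row b τ (fun t => wedgeCoeff a τ'.1 t)

theorem contr_mul_contr_add_contr_mul_contr (a b : Fin n) :
    contr j a * contr (j+1) b + contr j b * contr (j+1) a = 0 := by
  ext σ γ
  rw [Matrix.add_apply, contr_mul_contr_apply, contr_mul_contr_apply, Matrix.zero_apply]
  by_cases hab : a = b
  · subst hab
    simp [wedgeCoeff]
  by_cases h : a ∉ σ.1 ∧ b ∉ σ.1 ∧ γ.1 = insert b (insert a σ.1)
  · obtain ⟨ha, hb, hγ⟩ := h
    simp only [wedgeCoeff, mem_insert, ha, hb, hab, Ne.symm hab, hγ, insert_comm a b, or_self,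
      not_false_eq_true, and_self, if_true]
    exact insertSign_mul_insertSign_insert_add ha hb hab
  · simp only [wedgeCoeff, mem_insert, not_or]
    split_ifs <;> simp_all [insert_comm]

theorem transpose_contr_mul_contr_add_contr_mul_transpose_contr (a b : Fin n) :
    (contr j a)ᵀ * contr j b + contr (j+1) b * (contr (j+1) a)ᵀ = if a = b then 1 else 0 := by
  ext τ τ'
  rw [Matrix.add_apply, transpose_contr_mul_contr_apply, contr_mul_transpose_contr_apply]
  by_cases hab : a = b
  · subst hab
    rw [if_pos rfl, Matrix.one_apply]
    by_cases ha : a ∈ τ.1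
    · simp [ha, wedgeCoeff, insert_erase ha, insertSign_mul_self, eq_comm, Subtype.ext_iff]
    · simp [ha, wedgeCoeff_insert_self ha, insertSign_mul_self, eq_comm, Subtype.ext_iff]
  rw [if_neg hab, Matrix.zero_apply]
  by_cases h : a ∈ τ.1 ∧ b ∉ τ.1 ∧ τ'.1 = insert b (τ.1.erase a)
  · obtain ⟨ha, hb, hτ'⟩ := h
    set s := τ.1.erase a
    have has : a ∉ s := notMem_erase a τ.1
    have hbs : b ∉ s := fun h => hb (mem_of_mem_erase h)
    have hτ : τ.1 = insert a s := (insert_erase ha).symm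
    have hγ : insert b τ.1 = insert a τ'.1 := by rw [hτ, hτ', insert_comm]
    have haτ' : a ∉ τ'.1 := by simp [hτ', hab, has]
    rw [if_pos ha, if_pos hb, hγ, wedgeCoeff_insert_self haτ', if_pos rfl, hτ',
      wedgeCoeff_insert_self hbs, if_pos rfl, hτ,
      insertSign_insert_mul_insertSign_insert has hbs hab, add_neg_cancel]
  · have hB : b ∉ τ.1 → ¬(a ∉ τ'.1 ∧ insert b τ.1 = insert a τ'.1) := fun hb ⟨ha', he⟩ =>
      h ⟨mem_of_mem_insert_of_ne (he ▸ mem_insert_self a τ'.1) hab, hb,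
        by rw [← erase_insert ha', ← he, erase_insert_of_ne (Ne.symm hab)]⟩
    simp only [wedgeCoeff]
    split_ifs <;> simp_all

theorem sum_mul_wedgeCoeff_insert (x : Fin n → ℝ) {b : Fin n} {s t : Finset (Fin n)}
    (hs : b ∉ s) (ht : b ∉ t) :
    ∑ a, x a * wedgeCoeff a t (insert b s) = if t = s then x b * insertSign s b else 0 := by
  rw [sum_eq_single b (fun a _ hab => by rw [wedgeCoeff_insert_of_ne hab ht, mul_zero])
    (by simp), wedgeCoeff_insert_self hs, mul_ite, mul_zero]

noncomputable def wbdry (j : ℕ) (x : Fin n → ℝ) : Matrix (Face n j) (Face n (j+1)) ℝ :=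
  ∑ a, x a • contr j a

variable (x : Fin n → ℝ)

theorem wbdry_apply (σ : Face n j) (τ : Face n (j+1)) :
    wbdry j x σ τ = ∑ a, x a * wedgeCoeff a σ.1 τ.1 := by
  simp [wbdry, Matrix.sum_apply, contr]

theorem sum_smul_mul_sum_smul {l m p : Type*} [Fintype m] (f : Fin n → Matrix l m ℝ)
    (g : Fin n → Matrix m p ℝ) :
    (∑ a, x a • f a) * (∑ b, x b • g b) = ∑ a, ∑ b, (x a * x b) • (f a * g b) := by
  rw [Matrix.sum_mul]
  simp_rw [Matrix.mul_sum, Matrix.smul_mul, Matrix.mul_smul, smul_smul]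

theorem wbdry_mul_wbdry : wbdry j x * wbdry (j+1) x = 0 := by
  rw [wbdry, wbdry, sum_smul_mul_sum_smul]
  have hS : ∑ a, ∑ b, (x a * x b) • (contr j a * contr (j+1) b) =
      -∑ a, ∑ b, (x a * x b) • (contr j a * contr (j+1) b) := by
    conv_rhs => rw [sum_comm]
    simp only [← sum_neg_distrib]
    refine sum_congr rfl fun a _ => sum_congr rfl fun b _ => ?_
    rw [← smul_neg, neg_eq_of_add_eq_zero_left (contr_mul_contr_add_contr_mul_contr a b),
      mul_comm]
  ext σ γ
  have := congr_fun₂ hS σ γ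
  rw [Matrix.neg_apply] at this
  rw [Matrix.zero_apply]
  linarith

theorem transpose_wbdry_mul_wbdry_add :
    (wbdry j x)ᵀ * wbdry j x + wbdry (j+1) x * (wbdry (j+1) x)ᵀ = (∑ i, x i ^ 2) • 1 := by
  simp only [wbdry, transpose_sum, transpose_smul, sum_smul_mul_sum_smul]
  calc _ = ∑ a, ∑ b, (x a * x b) •
          ((contr j a)ᵀ * contr j b + contr (j+1) b * (contr (j+1) a)ᵀ) := by
        rw [sum_comm (f := fun a b => (x a * x b) • (contr (j+1) a * (contr (j+1) b)ᵀ)),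
          ← sum_add_distrib]
        refine sum_congr rfl fun a _ => ?_
        rw [← sum_add_distrib]
        exact sum_congr rfl fun b _ => by rw [smul_add, mul_comm (x b)]
    _ = ∑ a, (x a ^ 2) • (1 : Matrix (Face n (j+1)) (Face n (j+1)) ℝ) := by
        simp_rw [transpose_contr_mul_contr_add_contr_mul_transpose_contr, smul_ite, smul_zero,
          sum_ite_eq, mem_univ, if_true, sq]
    _ = _ := by rw [sum_smul]

theorem wbdry_mul_transpose_mul_self :
    wbdry j x * (wbdry j x)ᵀ * wbdry j x = (∑ i, x i ^ 2) • wbdry j x := by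
  rw [Matrix.mul_assoc, ← add_sub_cancel_right ((wbdry j x)ᵀ * wbdry j x)
    (wbdry (j+1) x * (wbdry (j+1) x)ᵀ), transpose_wbdry_mul_wbdry_add, Matrix.mul_sub,
    ← Matrix.mul_assoc (wbdry j x), wbdry_mul_wbdry, Matrix.zero_mul, sub_zero, Matrix.mul_smul,
    Matrix.mul_one]

theorem wbdry_mul_transpose_apply_self (τ : Face n j) :
    (wbdry j x * (wbdry j x)ᵀ) τ τ = ∑ a ∈ τ.1ᶜ, x a ^ 2 := by
  have hrow : ∀ b, ∑ γ, contr j b τ γ * wbdry j x τ γ =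
      if b ∉ τ.1 then x b * (insertSign τ.1 b * insertSign τ.1 b) else 0 := fun b => by
    simp only [wbdry_apply]
    rw [sum_contr_mul_row b τ (fun t => ∑ a, x a * wedgeCoeff a τ.1 t)]
    split_ifs with hb
    · rfl
    · rw [sum_mul_wedgeCoeff_insert x hb hb, if_pos rfl]
      ring
  calc (wbdry j x * (wbdry j x)ᵀ) τ τ
      = ∑ b, x b * ∑ γ, contr j b τ γ * wbdry j x τ γ := by
        simp only [Matrix.mul_apply, transpose_apply, mul_sum, ← mul_assoc]
        rw [sum_comm]
        simp [wbdry, Matrix.sum_apply, sum_mul]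
    _ = ∑ a ∈ τ.1ᶜ, x a ^ 2 := by
        simp_rw [hrow, insertSign_mul_self, mul_one, mul_ite, mul_zero, ← sq, ← mem_compl,
          Fintype.sum_ite_mem]

theorem Xdiag_mul_wbdry : Xdiag n j x * wbdry j x = bdry n j * Xdiag n (j+1) x := by
  ext σ τ
  rw [Xdiag, Xdiag, diagonal_mul, mul_diagonal, wbdry_apply, bdry, mul_sum, sum_mul,
    ← Fintype.sum_ite_mem τ.1]
  refine sum_congr rfl fun a _ => ?_
  by_cases h : a ∉ σ.1 ∧ τ.1 = insert a σ.1
  · obtain ⟨ha, hτ⟩ := notMem_and_eq_insert_iff.mp h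
    rw [wedgeCoeff, if_pos h, if_pos ha, if_pos hτ, h.2, prod_insert h.1, filter_insert,
      if_neg (lt_irrefl a), insertSign]
    ring
  · rw [wedgeCoeff, if_neg h, mul_zero, mul_zero]
    rw [notMem_and_eq_insert_iff] at h
    split_ifs <;> simp_all

theorem card_HFace (n k : ℕ) : Fintype.card (HFace n k) = (n - 1).choose k := by
  rw [Fintype.card_of_subtype (powersetCard k {a : Fin n | (a : ℕ) < n - 1})
    (fun s => by simp [subset_iff, and_comm]), card_powersetCard, Fin.card_filter_val_lt,
    min_eq_right (Nat.sub_le n 1)]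

theorem sum_face_sum_mem (f : Fin n → ℝ) (k : ℕ) :
    ∑ τ : Face n (k+1), ∑ i ∈ τ.1, f i = (n - 1).choose k * ∑ i, f i := by
  rw [← sum_subtype (powersetCard (k+1) univ) (fun s => by simp) (fun s => ∑ i ∈ s, f i)]
  simp_rw [← Fintype.sum_ite_mem _ f]
  rw [sum_comm, mul_sum]
  refine sum_congr rfl fun i _ => ?_
  rw [← sum_filter, sum_const, nsmul_eq_mul]
  simp_rw [← singleton_subset_iff]
  rw [card_filter_powersetCard_subset _ _ _ (subset_univ _) (by simp)]
  simp

-- The orthogonal projection onto the kernel of `(wbdry j x)ᵀ`, the weighted `j`-cocycles.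
noncomputable def cocycleProj (j : ℕ) (x : Fin n → ℝ) : Matrix (Face n j) (Face n j) ℝ :=
  1 - (∑ i, x i ^ 2)⁻¹ • (wbdry j x * (wbdry j x)ᵀ)

theorem isIdempotentElem_cocycleProj (hz : ∑ i, x i ^ 2 ≠ 0) :
    IsIdempotentElem (cocycleProj j x) :=
  isIdempotentElem_one_sub_smul_mul_transpose hz (wbdry_mul_transpose_mul_self x)

theorem isSymm_cocycleProj : (cocycleProj j x).IsSymm :=
  isSymm_one_sub_smul_mul_transpose _ _

theorem wbdry_mul_cocycleProj : wbdry j x * cocycleProj (j+1) x = wbdry j x := by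
  rw [cocycleProj, Matrix.mul_sub, Matrix.mul_one, Matrix.mul_smul, ← Matrix.mul_assoc,
    wbdry_mul_wbdry, Matrix.zero_mul, smul_zero, sub_zero]

theorem cocycleProj_apply_self (hz : ∑ i, x i ^ 2 ≠ 0) (τ : Face n j) :
    cocycleProj j x τ τ = (∑ i, x i ^ 2)⁻¹ * ∑ i ∈ τ.1, x i ^ 2 := by
  rw [cocycleProj, Matrix.sub_apply, Matrix.one_apply_eq, Matrix.smul_apply, smul_eq_mul,
    wbdry_mul_transpose_apply_self]
  rw [← sum_add_sum_compl τ.1] at hz ⊢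
  field_simp
  ring

theorem trace_cocycleProj (hz : ∑ i, x i ^ 2 ≠ 0) (k : ℕ) :
    (cocycleProj (k+1) x).trace = (n - 1).choose k := by
  simp only [Matrix.trace, Matrix.diag, cocycleProj_apply_self x hz, ← mul_sum, sum_face_sum_mem]
  field_simp

theorem bdryHat_mul_Xdiag_eq_submatrix (k : ℕ) : bdryHat n k * Xdiag n (k+1) x =
    (Xdiag n k x * wbdry k x).submatrix (fun σ : HFace n k => ⟨σ.1, σ.2.1⟩) id := by
  rw [Xdiag_mul_wbdry]
  rfl

theorem bdryHat_mul_Xdiag_apply (k : ℕ) (σ : HFace n k) (τ : Face n (k+1)) :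
    (bdryHat n k * Xdiag n (k+1) x) σ τ = (∏ i ∈ σ.1, x i) * wbdry k x ⟨σ.1, σ.2.1⟩ τ := by
  rw [bdryHat_mul_Xdiag_eq_submatrix, submatrix_apply, Xdiag, diagonal_mul, id]

theorem bdryHat_mul_Xdiag_mul_cocycleProj (k : ℕ) :
    bdryHat n k * Xdiag n (k+1) x * cocycleProj (k+1) x = bdryHat n k * Xdiag n (k+1) x := by
  rw [bdryHat_mul_Xdiag_eq_submatrix, ← submatrix_id_id (cocycleProj (k+1) x),
    ← submatrix_mul _ _ _ _ _ Function.bijective_id, Matrix.mul_assoc, wbdry_mul_cocycleProj]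

theorem isUnit_det_bdryHat_mul_Xdiag (hn : 0 < n) (hx : ∀ i, x i ≠ 0) (k : ℕ) :
    IsUnit ((bdryHat n k * Xdiag n (k+1) x) * (bdryHat n k * Xdiag n (k+1) x)ᵀ).det := by
  let w : Fin n := ⟨n - 1, Nat.sub_one_lt_of_lt hn⟩
  have hw (σ : HFace n k) : w ∉ σ.1 := fun h => (σ.2.2 w h).false
  have hcard (σ : HFace n k) : #(insert w σ.1) = k + 1 := by
    rw [card_insert_of_notMem (hw σ), σ.2.1]
  -- Each `σ` is the only row of `∂̂` meeting the column `σ ∪ {n}`.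
  have hpivot (σ σ' : HFace n k) : (bdryHat n k * Xdiag n (k+1) x) σ' ⟨insert w σ.1, hcard σ⟩ =
      if σ' = σ then (∏ i ∈ σ.1, x i) * (x w * insertSign σ.1 w) else 0 := by
    rw [bdryHat_mul_Xdiag_apply, wbdry_apply, sum_mul_wedgeCoeff_insert x (hw σ) (hw σ')]
    by_cases h : σ' = σ
    · simp [h]
    · simp [h, Subtype.ext_iff.not.mp h]
  refine isUnit_det_mul_transpose_of_pivot _ (fun σ => ⟨insert w σ.1, hcard σ⟩)
    (fun σ => ?_) (fun σ σ' h => by rw [hpivot, if_neg h])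
  rw [hpivot, if_pos rfl]
  exact mul_ne_zero (prod_ne_zero_iff.mpr fun i _ => hx i)
    (mul_ne_zero (hx w) (by simp [insertSign]))

end WeightedBoundary

theorem projection_diagonal_general (n k : ℕ)
    (x : Fin n → ℝ) (hx : ∀ i, x i ≠ 0) (τ : Face n (k+1)) :
    ((bdryHat n k * Xdiag n (k+1) x)ᵀ *
        (bdryHat n k * (Xdiag n (k+1) x * Xdiag n (k+1) x) * (bdryHat n k)ᵀ)⁻¹ *
        (bdryHat n k * Xdiag n (k+1) x)) τ τ
      = (∑ i, x i ^ 2)⁻¹ * ∑ i ∈ τ.1, x i ^ 2 := by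
  obtain ⟨v, -⟩ : τ.1.Nonempty := card_pos.mp (by rw [τ.2]; exact k.succ_pos)
  have hz : ∑ i, x i ^ 2 ≠ 0 :=
    (sum_pos (fun i _ => pow_two_pos_of_ne_zero (hx i)) ⟨v, mem_univ v⟩).ne'
  set A := bdryHat n k * Xdiag n (k+1) x
  have hL : bdryHat n k * (Xdiag n (k+1) x * Xdiag n (k+1) x) * (bdryHat n k)ᵀ = A * Aᵀ := by
    rw [transpose_mul, Xdiag, diagonal_transpose]
    simp only [A, Xdiag, Matrix.mul_assoc]
  have hP : rowSpaceProj A = cocycleProj (k+1) x :=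
    rowSpaceProj_eq_of_trace_eq (isUnit_det_bdryHat_mul_Xdiag x v.pos hx k)
      (isIdempotentElem_cocycleProj x hz) (isSymm_cocycleProj x)
      (bdryHat_mul_Xdiag_mul_cocycleProj x k) (by rw [trace_cocycleProj x hz, card_HFace])
  rw [hL, ← rowSpaceProj, hP, cocycleProj_apply_self x hz]

/-- the diagonal entries of `P^x` satisfy
`P^x(τ,τ) = z⁻¹ Σ_{i∈τ} xᵢ²`. -/
theorem projection_diagonal (n k : ℕ) (hk : 1 ≤ k) (hn : k < n)
    (x : Fin n → ℝ) (hx : ∀ i, x i ≠ 0) (τ : Face n (k+1)) :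
    ((bdryHat n k * Xdiag n (k+1) x)ᵀ *
        (bdryHat n k * (Xdiag n (k+1) x * Xdiag n (k+1) x) * (bdryHat n k)ᵀ)⁻¹ *
        (bdryHat n k * Xdiag n (k+1) x)) τ τ
      = (∑ i, x i ^ 2)⁻¹ * ∑ i ∈ τ.1, x i ^ 2 :=
  projection_diagonal_general n k x hx τ
end

section
/- The matrix ∂̂ ∂̂ᵗ is invertible over ℚ (equivalently over ℝ), and ∂̂ᵗ (∂̂ ∂̂ᵗ)⁻¹ ∂̂ = n⁻¹ · ∂ᵗ ∂; that is, the orthogonal projection onto the row space of ∂̂ equals n⁻¹ ∂ᵗ∂. -/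
open Matrix

/-!
Let `ι_i` be contraction with the vertex `i` on the chains of the full simplex on `[n]`, all
degrees at once. Then `∂ = ∑ ι_i`, and the anticommutation relations `ι_i ι_j + ι_j ι_i = 0`,
`ι_iᵀ ι_j + ι_j ι_iᵀ = δ_ij` give `∂∂ = 0`, `∂ᵀ∂ + ∂∂ᵀ = n` and, for the last vertex `v`,
`ι_vᵀ ∂ + ∂ ι_vᵀ = 1`. The first two give `∂ ∂ᵀ ∂ = n ∂`, so `n⁻¹ ∂ᵀ∂` is the orthogonal
projection onto the row space of `∂`. The first and the third give `∂ = (∂ ι_vᵀ) ∂`; as coning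
with `v` (that is, `ι_vᵀ`) kills the faces through `v`, only rows of `∂` at faces avoiding `v`
enter, so the rows of `∂̂` span the row space of `∂`. Finally `ι_vᵀ` restricts to a right
inverse of `∂̂`, so `∂̂ ∂̂ᵀ` is positive definite.
-/

open Finset

namespace Matrix

lemma submatrix_mul_submatrix_subtype {l m o α β R : Type*} [Fintype m]
    [NonUnitalNonAssocSemiring R] {p : m → Prop} [DecidablePred p] [Fintype (Subtype p)]
    (A : Matrix l m R) (B : Matrix m o R) (f : α → l) (g : β → o)
    (h : ∀ a b x, ¬ p x → A (f a) x * B x (g b) = 0) :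
    A.submatrix f (Subtype.val : Subtype p → m) * B.submatrix (Subtype.val : Subtype p → m) g
      = (A * B).submatrix f g := by
  ext a b
  calc ∑ x : Subtype p, A (f a) x * B x (g b)
      = ∑ x ∈ univ.filter p, A (f a) x * B x (g b) :=
        (sum_subtype _ (by simp) (fun x => A (f a) x * B x (g b))).symm
    _ = ∑ x, A (f a) x * B x (g b) :=
        sum_filter_of_ne fun x _ hx => by_contra fun hp => hx (h a b x hp)

lemma isUnit_mul_transpose_of_mul_eq_one {m ι : Type*} [Fintype m] [DecidableEq m]
    [Fintype ι] {B : Matrix m ι ℝ} {C : Matrix ι m ℝ} (h : B * C = 1) :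
    IsUnit (B * Bᵀ) := by
  have hinj : Function.Injective B.vecMul := fun x y hxy => by
    simpa [vecMul_vecMul, h] using congrArg (· ᵥ* C) hxy
  simpa [conjTranspose_eq_transpose_of_trivial] using
    (PosDef.mul_conjTranspose_self B hinj).isUnit

lemma transpose_mul_inv_mul_eq_inv_smul {K m p ι : Type*} [Field K] [Fintype m]
    [DecidableEq m] [Fintype p] [Fintype ι] {B : Matrix m ι K} {D : Matrix p ι K}
    {S : Matrix p m K} {c : K} (hB : IsUnit (B * Bᵀ)) (hD : D = S * B)
    (hBD : B * (Dᵀ * D) = c • B) (hc : c ≠ 0) :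
    Bᵀ * (B * Bᵀ)⁻¹ * B = c⁻¹ • (Dᵀ * D) := by
  have hQB : Bᵀ * (B * Bᵀ)⁻¹ * B * Bᵀ = Bᵀ := by
    rw [Matrix.mul_assoc, Matrix.mul_assoc, nonsing_inv_mul _
      ((isUnit_iff_isUnit_det _).1 hB), Matrix.mul_one]
  have hfix : Bᵀ * (B * Bᵀ)⁻¹ * B * (Dᵀ * D) = Dᵀ * D := by
    simp only [hD, transpose_mul, ← Matrix.mul_assoc, hQB]
  have hscale : Bᵀ * (B * Bᵀ)⁻¹ * B * (Dᵀ * D) = c • (Bᵀ * (B * Bᵀ)⁻¹ * B) := by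
    rw [Matrix.mul_assoc _ B, hBD, Matrix.mul_smul]
  rw [eq_inv_smul_iff₀ hc, ← hscale, hfix]

end Matrix

namespace FullSimplex

variable {n : ℕ}

noncomputable def incidenceSign (a : Fin n) (s : Finset (Fin n)) : ℝ :=
  (-1) ^ #{b ∈ s | b < a}

lemma incidenceSign_mul_self (a : Fin n) (s : Finset (Fin n)) :
    incidenceSign a s * incidenceSign a s = 1 := by
  rw [incidenceSign, ← pow_add, ← two_mul, pow_mul]; norm_num

@[simp] lemma incidenceSign_erase_self (a : Fin n) (s : Finset (Fin n)) :
    incidenceSign a (s.erase a) = incidenceSign a s := by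
  rw [incidenceSign, incidenceSign, filter_erase, erase_eq_of_notMem (by simp)]

@[simp] lemma incidenceSign_insert_self (a : Fin n) (s : Finset (Fin n)) :
    incidenceSign a (insert a s) = incidenceSign a s := by
  simp [incidenceSign, filter_insert]

lemma incidenceSign_insert {a b : Fin n} {s : Finset (Fin n)} (hb : b ∉ s) :
    incidenceSign a (insert b s) = (if b < a then -1 else 1) * incidenceSign a s := by
  unfold incidenceSign
  split_ifs with h
  · rw [filter_insert, if_pos h, card_insert_of_notMem (by simp [hb]), pow_succ]; ring
  · rw [filter_insert, if_neg h, one_mul]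

lemma incidenceSign_mul_insert_add_swap {a b : Fin n} {s : Finset (Fin n)}
    (hab : a ≠ b) (ha : a ∉ s) (hb : b ∉ s) :
    incidenceSign a s * incidenceSign b (insert a s)
      + incidenceSign b s * incidenceSign a (insert b s) = 0 := by
  rw [incidenceSign_insert ha, incidenceSign_insert hb]
  rcases hab.lt_or_gt with h | h <;> simp [h, h.not_gt] <;> ring

lemma incidenceSign_mul_add_insert_mul_insert {a b : Fin n} {s : Finset (Fin n)}
    (hab : a ≠ b) (ha : a ∉ s) (hb : b ∉ s) :
    incidenceSign a s * incidenceSign b s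
      + incidenceSign b (insert a s) * incidenceSign a (insert b s) = 0 := by
  rw [incidenceSign_insert ha, incidenceSign_insert hb]
  rcases hab.lt_or_gt with h | h <;> simp [h, h.not_gt] <;> ring

noncomputable def contraction (i : Fin n) : Matrix (Finset (Fin n)) (Finset (Fin n)) ℝ :=
  fun s t => if i ∈ t ∧ s = t.erase i then incidenceSign i t else 0

lemma contraction_apply_eq_insert (i : Fin n) (s t : Finset (Fin n)) :
    contraction i s t = if i ∉ s ∧ t = insert i s then incidenceSign i s else 0 := by
  unfold contraction
  by_cases h : i ∉ s ∧ t = insert i s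
  · obtain ⟨hi, rfl⟩ := h
    simp [erase_insert hi, hi]
  · rw [if_neg h, if_neg]
    rintro ⟨hi, rfl⟩
    exact h ⟨notMem_erase i t, (insert_erase hi).symm⟩

lemma card_eq_of_contraction_ne_zero {i : Fin n} {s t : Finset (Fin n)}
    (h : contraction i s t ≠ 0) : #t = #s + 1 := by
  rw [contraction_apply_eq_insert] at h
  split_ifs at h with hst
  · exact hst.2 ▸ card_insert_of_notMem hst.1
  · exact absurd rfl h

lemma contraction_mul_apply {ι : Type*} (i : Fin n) (M : Matrix (Finset (Fin n)) ι ℝ)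
    (s : Finset (Fin n)) (x : ι) :
    (contraction i * M) s x = if i ∉ s then incidenceSign i s * M (insert i s) x else 0 := by
  simp_rw [Matrix.mul_apply, contraction_apply_eq_insert, ite_and, ite_mul, zero_mul,
    sum_ite_irrel, sum_ite_eq', mem_univ, if_true, sum_const_zero]

lemma transpose_contraction_mul_apply {ι : Type*} (i : Fin n) (M : Matrix (Finset (Fin n)) ι ℝ)
    (t : Finset (Fin n)) (x : ι) :
    ((contraction i)ᵀ * M) t x = if i ∈ t then incidenceSign i t * M (t.erase i) x else 0 := by
  simp_rw [Matrix.mul_apply, Matrix.transpose_apply, contraction, ite_and, ite_mul, zero_mul,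
    sum_ite_irrel, sum_ite_eq', mem_univ, if_true, sum_const_zero]

lemma contraction_mul_contraction_add (i j : Fin n) :
    contraction i * contraction j + contraction j * contraction i = 0 := by
  ext s u
  simp only [Matrix.add_apply, contraction_mul_apply, contraction_apply_eq_insert,
    Matrix.zero_apply]
  obtain rfl | hij := eq_or_ne i j
  · simp
  by_cases hi : i ∈ s
  · simp [hi]
  by_cases hj : j ∈ s
  · simp [hj]
  by_cases hu : u = insert j (insert i s)
  · simpa [hi, hj, hij, hij.symm, hu, insert_comm i j]
      using incidenceSign_mul_insert_add_swap hij hi hj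
  · simp [hi, hj, hij, hij.symm, hu, insert_comm i j]

lemma transpose_contraction_mul_add (i j : Fin n) :
    (contraction i)ᵀ * contraction j + contraction j * (contraction i)ᵀ
      = if i = j then 1 else 0 := by
  ext t t'
  simp only [Matrix.add_apply, transpose_contraction_mul_apply, contraction_mul_apply,
    Matrix.transpose_apply]
  rw [contraction_apply_eq_insert j (t.erase i)]
  simp only [contraction]
  obtain rfl | hij := eq_or_ne i j
  · rcases eq_or_ne t t' with rfl | htt
    · by_cases hi : i ∈ t <;> simp [hi, incidenceSign_mul_self]
    · by_cases hi : i ∈ t <;> simp [hi, htt.symm, Matrix.one_apply_ne htt]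
  rw [if_neg hij, Matrix.zero_apply]
  by_cases hi : i ∈ t
  swap
  · simp [hi, hij]
  by_cases hj : j ∈ t
  · simp [hi, hj, hij.symm]
  obtain ⟨r, hir, rfl⟩ : ∃ r, i ∉ r ∧ t = insert i r := ⟨t.erase i, by simp, by simp [hi]⟩
  have hjr : j ∉ r := fun h => hj (mem_insert_of_mem h)
  by_cases ht' : t' = insert j r
  · have hsign : incidenceSign i (insert j (insert i r)) = incidenceSign i (insert j r) := by
      rw [insert_comm, incidenceSign_insert_self]
    simpa [hir, hjr, hij, hij.symm, ht', hsign, erase_insert hir, erase_insert_of_ne]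
      using incidenceSign_mul_add_insert_mul_insert hij hir hjr
  · simp [hir, hjr, hij, hij.symm, ht', erase_insert hir, erase_insert_of_ne]

lemma contraction_apply_eq_zero_of_mem {i : Fin n} {s : Finset (Fin n)} (h : i ∈ s)
    (t : Finset (Fin n)) : contraction i s t = 0 := by
  simp [contraction_apply_eq_insert, h]

variable (n) in
noncomputable def boundary : Matrix (Finset (Fin n)) (Finset (Fin n)) ℝ :=
  ∑ i, contraction i

lemma boundary_apply_eq_zero {s t : Finset (Fin n)} (h : #t ≠ #s + 1) : boundary n s t = 0 := by
  rw [boundary, Matrix.sum_apply]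
  exact sum_eq_zero fun i _ => by_contra fun hi => h (card_eq_of_contraction_ne_zero hi)

lemma boundary_mul_self : boundary n * boundary n = 0 := by
  have h : boundary n * boundary n + boundary n * boundary n = 0 := by
    calc boundary n * boundary n + boundary n * boundary n
        = ∑ i, ∑ j, (contraction i * contraction j + contraction j * contraction i) := by
          simp only [boundary, sum_mul, mul_sum, sum_add_distrib]
          rw [sum_comm (f := fun i j => contraction j * contraction i)]
      _ = 0 := by simp [contraction_mul_contraction_add]
  rwa [← two_smul ℝ, smul_eq_zero, or_iff_right two_ne_zero] at h

lemma transpose_contraction_mul_boundary_add (i : Fin n) :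
    (contraction i)ᵀ * boundary n + boundary n * (contraction i)ᵀ = 1 := by
  simp [boundary, mul_sum, sum_mul, ← sum_add_distrib, transpose_contraction_mul_add]

lemma transpose_boundary_mul_add :
    (boundary n)ᵀ * boundary n + boundary n * (boundary n)ᵀ = (n : ℝ) • 1 := by
  have h : (boundary n)ᵀ = ∑ i, (contraction i)ᵀ := Matrix.transpose_sum _ _
  rw [h, sum_mul, mul_sum, ← sum_add_distrib]
  simp [transpose_contraction_mul_boundary_add, Nat.cast_smul_eq_nsmul]

lemma boundary_mul_transpose_mul_self :
    boundary n * (boundary n)ᵀ * boundary n = (n : ℝ) • boundary n := by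
  calc boundary n * (boundary n)ᵀ * boundary n
      = boundary n * ((boundary n)ᵀ * boundary n + boundary n * (boundary n)ᵀ) := by
        rw [mul_add, ← Matrix.mul_assoc _ (boundary n), boundary_mul_self, zero_mul, add_zero,
          Matrix.mul_assoc]
    _ = (n : ℝ) • boundary n := by rw [transpose_boundary_mul_add, Matrix.mul_smul, mul_one]

lemma boundary_mul_transpose_contraction_mul_boundary (i : Fin n) :
    boundary n * (contraction i)ᵀ * boundary n = boundary n := by
  calc boundary n * (contraction i)ᵀ * boundary n
      = boundary n * ((contraction i)ᵀ * boundary n + boundary n * (contraction i)ᵀ) := by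
        rw [mul_add, ← Matrix.mul_assoc _ (boundary n), boundary_mul_self, zero_mul, add_zero,
          Matrix.mul_assoc]
    _ = boundary n := by rw [transpose_contraction_mul_boundary_add, mul_one]

end FullSimplex

open FullSimplex

lemma bdry_eq_submatrix (n k : ℕ) :
    bdry n k = (boundary n).submatrix Subtype.val Subtype.val := by
  ext σ τ
  simp only [bdry, Matrix.submatrix_apply, boundary, Matrix.sum_apply, contraction, ite_and,
    sum_ite_mem, univ_inter]
  rfl

lemma bdryHat_eq_submatrix (n k : ℕ) :
    bdryHat n k = (boundary n).submatrix Subtype.val Subtype.val := by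
  ext σ τ
  exact congrFun (congrFun (bdry_eq_submatrix n k) ⟨σ.1, σ.2.1⟩) τ

lemma transpose_bdry_mul_bdry (n k : ℕ) :
    (bdry n k)ᵀ * bdry n k
      = ((boundary n)ᵀ * boundary n).submatrix Subtype.val Subtype.val := by
  rw [bdry_eq_submatrix, Matrix.transpose_submatrix, submatrix_mul_submatrix_subtype]
  intro τ τ' s hs
  simp only [Matrix.transpose_apply]
  rw [boundary_apply_eq_zero (by rw [τ.2]; omega), zero_mul]

lemma bdryHat_mul_transpose_bdry_mul_bdry (n k : ℕ) :
    bdryHat n k * ((bdry n k)ᵀ * bdry n k) = (n : ℝ) • bdryHat n k := by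
  rw [transpose_bdry_mul_bdry, bdryHat_eq_submatrix, submatrix_mul_submatrix_subtype,
    ← Matrix.mul_assoc, boundary_mul_transpose_mul_self]
  · rfl
  intro σ τ t ht
  rw [boundary_apply_eq_zero (by rw [σ.2.1]; exact ht), zero_mul]

lemma forall_mem_lt_iff_notMem {n : ℕ} {v : Fin n} (hv : (v : ℕ) = n - 1)
    {s : Finset (Fin n)} : (∀ a ∈ s, (a : ℕ) < n - 1) ↔ v ∉ s := by
  refine ⟨fun h hvs => (h v hvs).ne hv, fun h a ha => ?_⟩
  have := Fin.val_ne_of_ne (ne_of_mem_of_not_mem ha h)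
  omega

lemma exists_bdry_eq_mul_bdryHat {n : ℕ} (k : ℕ) {v : Fin n} (hv : (v : ℕ) = n - 1) :
    ∃ S : Matrix (Face n k) (HFace n k) ℝ, bdry n k = S * bdryHat n k := by
  refine ⟨((boundary n) * (contraction v)ᵀ).submatrix Subtype.val Subtype.val, ?_⟩
  rw [bdryHat_eq_submatrix, submatrix_mul_submatrix_subtype,
    boundary_mul_transpose_contraction_mul_boundary, bdry_eq_submatrix]
  intro σ τ u hu
  rw [not_and_or, forall_mem_lt_iff_notMem hv, not_not] at hu
  rcases hu with hu | hu
  · rw [boundary_apply_eq_zero (by rw [τ.2]; omega), mul_zero]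
  · simp [Matrix.mul_apply, contraction_apply_eq_zero_of_mem hu]

lemma exists_bdryHat_mul_eq_one {n : ℕ} (k : ℕ) {v : Fin n} (hv : (v : ℕ) = n - 1) :
    ∃ C : Matrix (Face n (k + 1)) (HFace n k) ℝ, bdryHat n k * C = 1 := by
  refine ⟨(contraction v)ᵀ.submatrix Subtype.val Subtype.val, ?_⟩
  rw [bdryHat_eq_submatrix, submatrix_mul_submatrix_subtype,
    eq_sub_of_add_eq' (transpose_contraction_mul_boundary_add v)]
  · ext σ σ'
    simp [transpose_contraction_mul_apply, (forall_mem_lt_iff_notMem hv).1 σ.2.2,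
      Matrix.one_apply, Subtype.ext_iff]
  · intro σ σ' t ht
    rw [boundary_apply_eq_zero (by rw [σ.2.1]; exact ht), zero_mul]

theorem projection_all_ones_general (n k : ℕ) (hn : k < n) :
    IsUnit (bdryHat n k * (bdryHat n k)ᵀ) ∧
    (bdryHat n k)ᵀ * (bdryHat n k * (bdryHat n k)ᵀ)⁻¹ * bdryHat n k
      = (n : ℝ)⁻¹ • ((bdry n k)ᵀ * bdry n k) := by
  let v : Fin n := ⟨n - 1, by omega⟩
  obtain ⟨C, hC⟩ := exists_bdryHat_mul_eq_one k (v := v) rfl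
  obtain ⟨S, hS⟩ := exists_bdry_eq_mul_bdryHat k (v := v) rfl
  have hunit := isUnit_mul_transpose_of_mul_eq_one hC
  exact ⟨hunit, transpose_mul_inv_mul_eq_inv_smul hunit hS
    (bdryHat_mul_transpose_bdry_mul_bdry n k) (Nat.cast_ne_zero.2 (by omega))⟩

/-- Mészáros: `∂̂ ∂̂ᵗ` is invertible and
`∂̂ᵗ(∂̂ ∂̂ᵗ)⁻¹∂̂ = n⁻¹ ∂ᵗ∂`. -/
theorem projection_all_ones (n k : ℕ) (hk : 1 ≤ k) (hn : k < n) :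
    IsUnit (bdryHat n k * (bdryHat n k)ᵀ) ∧
    (bdryHat n k)ᵀ * (bdryHat n k * (bdryHat n k)ᵀ)⁻¹ * bdryHat n k
      = (n : ℝ)⁻¹ • ((bdry n k)ᵀ * bdry n k) :=
  projection_all_ones_general n k hn
end
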